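/- arXiv:2007.15204 — 5 statements merged into one kernel-verified Lean document; each statement's English description precedes it below -/
import Mathlib

section
/- Let T > 0, let a, b, c, f : (0,T) × (0,1) → ℝ with sup_{0<x<1, 0<t≤T} |f(t,x)| < +∞, and let u ∈ C⁰([0,T] × [0,1]) with u[t] ∈ C²((0,1)) for almost all t ∈ (0,T), ∂u/∂t existing and continuous on (0,T) × [0,1], and ∂u/∂t = a·∂²u/∂x² + b·∂u/∂x + c·u + f for almost all t ∈ (0,T) and all x ∈ (0,1). Suppose a(t,x) ≥ 0 on (0,T)×(0,1) and σ := − sup_{0<x<1, t∈(0,T)} c(t,x) > 0. Then for all ζ ∈ [0,σ) and t ∈ (0,T]: ‖u[t]‖_∞ ≤ max( exp(−ζt)·‖u[0]‖_∞, sup_{0<s≤t} max( |u(s,0)|, |u(s,1)|, ‖f[s]‖_∞/(σ−ζ) )·exp(−ζ(t−s)) ). -/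
/-!
Put `m s = e^{ζ s} ‖u[s]‖_∞` and let `K` be `e^{ζ t}` times the right-hand side, so that
`m 0`, the weighted boundary values and `e^{ζ s} ‖f[s]‖_∞ / (σ - ζ)` are all at most `K`.
If `m` exceeded `K` on `[0, t]`, it would do so at a time `τ < t` where `m` is maximal on
`[0, τ]`, and `|u[τ]|` would attain its maximum at an interior point `x`. At an interior maximum
of `|u|` one has `u u_x = 0` and `u u_xx ≤ 0`, so the equation gives
`u u_t ≤ -σ u² + |u| ‖f‖_∞`, whence `d/ds (e^{ζ s} u(s, x))² < 0` at `s = τ` as long as `m > K`.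
Then `m` was larger just before `τ`, a contradiction. The equation only holds for almost every
time, so this inequality is first proved at good times `tₙ ↑ τ` and passed to the limit using the
continuity of `u` and `u_t`.
-/

open Set MeasureTheory Filter Topology

theorem IsLocalMax.hasDerivAt_hasDerivAt_nonpos {f f' : ℝ → ℝ} {x f'' : ℝ}
    (hmax : IsLocalMax f x) (hf : ∀ᶠ y in 𝓝 x, HasDerivAt f (f' y) y)
    (hf' : HasDerivAt f' f'' x) : f'' ≤ 0 := by
  by_contra! hpos
  have hderiv : deriv f =ᶠ[𝓝 x] f' := hf.mono fun y hy => hy.deriv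
  -- by the sufficient second-derivative test `x` is also a local minimum, so `f` is locally
  -- constant near `x` and `f''` vanishes
  have hmin : IsLocalMin f x :=
    isLocalMin_of_deriv_deriv_pos (by rwa [hderiv.deriv_eq, hf'.deriv])
      (by rw [hderiv.eq_of_nhds]; exact hmax.hasDerivAt_eq_zero hf.self_of_nhds)
      hf.self_of_nhds.continuousAt
  have hconst : ∀ᶠ y in 𝓝 x, ∀ᶠ z in 𝓝 y, f z = f x :=
    ((hmin.and hmax).mono fun z hz => le_antisymm hz.2 hz.1).eventually_nhds
  have hzero : f' =ᶠ[𝓝 x] fun _ => 0 := by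
    filter_upwards [hf, hconst] with y hy hy'
    exact hy.unique ((hasDerivAt_const y (f x)).congr_of_eventuallyEq hy')
  exact hpos.ne' (hf'.unique ((hasDerivAt_const x 0).congr_of_eventuallyEq hzero))

theorem IsLocalMax.mul_secondOrder_le_of_abs {g g' : ℝ → ℝ} {x g'' α β γ φ : ℝ}
    (hmax : IsLocalMax (fun y => |g y|) x) (hg : ∀ᶠ y in 𝓝 x, HasDerivAt g (g' y) y)
    (hg' : HasDerivAt g' g'' x) (hα : 0 ≤ α) :
    g x * (α * g'' + β * g' x + γ * g x + φ) ≤ γ * g x ^ 2 + |g x| * |φ| := by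
  -- the derivative tests for `g ^ 2` avoid a case split on the sign of `g x`
  have hsq : IsLocalMax (fun y => g y ^ 2) x :=
    hmax.mono fun y hy => by simpa only [sq_abs] using pow_le_pow_left₀ (abs_nonneg _) hy 2
  have hsq' : ∀ᶠ y in 𝓝 x, HasDerivAt (fun y => g y ^ 2) (2 * g y * g' y) y :=
    hg.mono fun y hy => by simpa using hy.fun_pow 2
  have hfirst : g x * g' x = 0 := by
    have := hsq.hasDerivAt_eq_zero hsq'.self_of_nhds
    linarith
  have hsecond : g' x * g' x + g x * g'' ≤ 0 := by
    have := hsq.hasDerivAt_hasDerivAt_nonpos hsq' ((hg.self_of_nhds.const_mul 2).mul hg')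
    linarith
  have hφ : g x * φ ≤ |g x| * |φ| := by rw [← abs_mul]; exact le_abs_self _
  have hα' : α * (g x * g'') ≤ 0 :=
    mul_nonpos_of_nonneg_of_nonpos hα (by nlinarith [mul_self_nonneg (g' x)])
  linear_combination hα' + β * hfirst + hφ

theorem frequently_nhdsLT_of_ae_restrict {P : ℝ → Prop} {a b τ : ℝ}
    (h : ∀ᵐ t ∂(volume.restrict (Ioo a b)), P t) (hτ : τ ∈ Ioc a b) :
    ∃ᶠ t in 𝓝[<] τ, t ∈ Ioo a b ∧ P t := by
  intro hnot
  obtain ⟨l, hl, hsub⟩ := mem_nhdsLT_iff_exists_Ioo_subset.mp hnot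
  have hI : Ioo (max l a) τ ⊆ Ioo a b := fun t ht =>
    ⟨(le_max_right l a).trans_lt ht.1, ht.2.trans_le hτ.2⟩
  have hpos : volume.restrict (Ioo a b) (Ioo (max l a) τ) ≠ 0 := by
    rw [Measure.restrict_apply measurableSet_Ioo, inter_eq_self_of_subset_left hI]
    simpa using ⟨hl, hτ.1⟩
  obtain ⟨t, ht, hPt⟩ := Measure.exists_mem_of_measure_ne_zero_of_ae hpos (ae_restrict_of_ae h)
  exact hsub ⟨(le_max_left l a).trans_lt ht.1, ht.2⟩ ⟨hI ht, hPt⟩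

theorem le_of_forall_frequently_nhdsLT_lt {φ : ℝ → ℝ} {a b K : ℝ}
    (hφ : ContinuousOn φ (Icc a b)) (ha : φ a ≤ K)
    (h : ∀ τ ∈ Ioo a b, K < φ τ → ∃ᶠ s in 𝓝[<] τ, φ τ < φ s) :
    ∀ t ∈ Icc a b, φ t ≤ K := by
  have hIco : ∀ t ∈ Ico a b, φ t ≤ K := by
    intro t ht
    by_contra! hKt
    obtain ⟨τ, hτ, hτmax⟩ := isCompact_Icc.exists_isMaxOn (nonempty_Icc.mpr ht.1)
      (hφ.mono (Icc_subset_Icc_right ht.2.le))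
    have hKτ : K < φ τ := hKt.trans_le (hτmax (right_mem_Icc.mpr ht.1))
    have haτ : a < τ := hτ.1.lt_of_ne (by rintro rfl; linarith)
    obtain ⟨s, hs, hsτ⟩ := ((h τ ⟨haτ, hτ.2.trans_lt ht.2⟩ hKτ).and_eventually
      (Ioo_mem_nhdsLT haτ)).exists
    exact (hτmax ⟨hsτ.1.le, hsτ.2.le.trans hτ.2⟩).not_gt hs
  rcases eq_or_ne a b with rfl | hab
  · intro t ht
    rw [Icc_self] at ht
    rwa [mem_singleton_iff.mp ht]
  · rw [← closure_Ico hab] at hφ ⊢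
    exact fun t ht => le_on_closure hIco hφ continuousOn_const ht

theorem HasDerivAt.eventually_nhdsLT_lt_of_le {g φ : ℝ → ℝ} {τ g' : ℝ}
    (hg : HasDerivAt g g' τ) (hg' : g' < 0) (hle : ∀ᶠ s in 𝓝[<] τ, g s ≤ φ s)
    (heq : g τ = φ τ) :
    ∀ᶠ s in 𝓝[<] τ, φ τ < φ s := by
  filter_upwards [(hasDerivAt_iff_tendsto_slope_left_right.mp hg).1.eventually
    (eventually_lt_nhds hg'), hle, self_mem_nhdsWithin] with s hs hle (hsτ : s < τ)
  rw [slope_comm, slope_neg_iff_of_le hsτ.le] at hs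
  exact heq ▸ hs.trans_le hle

theorem le_neg_of_eq_neg_sSup_image {α : Type*} {S : Set α} {g : α → ℝ} {σ : ℝ}
    (hσ : σ = -sSup (g '' S)) (hpos : 0 < σ) : ∀ p ∈ S, g p ≤ -σ := by
  by_cases hS : BddAbove (g '' S)
  · exact fun p hp => hσ ▸ (neg_neg (sSup (g '' S))).symm ▸ le_csSup hS (mem_image_of_mem g hp)
  · rw [Real.sSup_of_not_bddAbove hS, neg_zero] at hσ
    exact absurd hpos hσ.not_gt

theorem bddAbove_image_mul_exp_neg {h : ℝ → ℝ} {ζ t C : ℝ} (hζ : 0 ≤ ζ)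
    (hh : ∀ s ∈ Ioc 0 t, 0 ≤ h s ∧ h s ≤ C) :
    BddAbove ((fun s => h s * Real.exp (-ζ * (t - s))) '' Ioc 0 t) := by
  refine ⟨C, forall_mem_image.mpr fun s hs => ?_⟩
  have hexp : Real.exp (-ζ * (t - s)) ≤ 1 := Real.exp_le_one_iff.mpr (by nlinarith [hs.2])
  exact (mul_le_of_le_one_right (hh s hs).1 hexp).trans (hh s hs).2

theorem exp_mul_le_exp_mul_of_mul_exp_neg_le {ζ s t y h R : ℝ} (hy : y ≤ h)
    (hR : h * Real.exp (-ζ * (t - s)) ≤ R) : Real.exp (ζ * s) * y ≤ Real.exp (ζ * t) * R :=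
  calc Real.exp (ζ * s) * y ≤ Real.exp (ζ * s) * h := by gcongr
    _ = Real.exp (ζ * t) * (h * Real.exp (-ζ * (t - s))) := by
      rw [mul_left_comm, ← Real.exp_add]; ring_nf
    _ ≤ Real.exp (ζ * t) * R := by gcongr

noncomputable def supNormOn (s : Set ℝ) (g : ℝ → ℝ) : ℝ := sSup ((fun x => |g x|) '' s)

theorem supNormOn_nonneg (s : Set ℝ) (g : ℝ → ℝ) : 0 ≤ supNormOn s g :=
  Real.sSup_nonneg <| forall_mem_image.mpr fun _ _ => abs_nonneg _

theorem abs_le_supNormOn {s : Set ℝ} {g : ℝ → ℝ} (hg : BddAbove ((fun x => |g x|) '' s))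
    {x : ℝ} (hx : x ∈ s) : |g x| ≤ supNormOn s g :=
  le_csSup hg (mem_image_of_mem _ hx)

theorem supNormOn_le {s : Set ℝ} {g : ℝ → ℝ} (hs : s.Nonempty) {C : ℝ}
    (hC : ∀ x ∈ s, |g x| ≤ C) : supNormOn s g ≤ C :=
  csSup_le (hs.image _) (forall_mem_image.mpr hC)

theorem IsCompact.exists_isMaxOn_abs_eq_supNormOn {s : Set ℝ} {g : ℝ → ℝ} (hs : IsCompact s)
    (hne : s.Nonempty) (hg : ContinuousOn g s) :
    ∃ x ∈ s, IsMaxOn (fun y => |g y|) s x ∧ |g x| = supNormOn s g := by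
  obtain ⟨x, hx, hsup, hmax⟩ := hs.exists_sSup_image_eq_and_ge hne hg.abs
  exact ⟨x, hx, fun y hy => hmax y hy, hsup.symm⟩

theorem continuousOn_supNormOn {u : ℝ → ℝ → ℝ} {a b c d : ℝ} (hab : a ≤ b) (hcd : c ≤ d)
    (hu : ContinuousOn (fun p : ℝ × ℝ => u p.1 p.2) (Icc a b ×ˢ Icc c d)) :
    ContinuousOn (fun t => supNormOn (Icc c d) (u t)) (Icc a b) := by
  -- extend `u` continuously to the whole plane by clamping both coordinates
  set v : ℝ → ℝ → ℝ := fun t x => |u (projIcc a b hab t) (projIcc c d hcd x)|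
  have hv : Continuous ↿v :=
    (hu.comp_continuous
      (f := fun p : ℝ × ℝ => ((projIcc a b hab p.1 : ℝ), (projIcc c d hcd p.2 : ℝ)))
      (by fun_prop) fun p => ⟨(projIcc a b hab p.1).2, (projIcc c d hcd p.2).2⟩).abs
  refine (((isCompact_Icc (a := c) (b := d)).continuous_sSup hv).continuousOn).congr fun t ht => ?_
  refine congrArg sSup (image_congr fun x hx => ?_)
  simp only [v, projIcc_of_mem hab ht, projIcc_of_mem hcd hx]

section MaximumPrinciple

variable {T σ ζ K : ℝ} {a b c f u ut ux uxx : ℝ → ℝ → ℝ}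

theorem continuousOn_slice
    (hu : ContinuousOn (fun p : ℝ × ℝ => u p.1 p.2) (Icc 0 T ×ˢ Icc 0 1)) {s : ℝ}
    (hs : s ∈ Icc 0 T) : ContinuousOn (u s) (Icc 0 1) :=
  hu.comp (f := fun x => (s, x)) (Continuous.continuousOn (by fun_prop)) fun _ hx => ⟨hs, hx⟩

theorem mul_ut_le_of_isMaxOn {s x : ℝ}
    (hux : ∀ y ∈ Ioo (0:ℝ) 1, HasDerivAt (u s) (ux s y) y)
    (huxx : ∀ y ∈ Ioo (0:ℝ) 1, HasDerivAt (ux s) (uxx s y) y)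
    (hpde : ∀ y ∈ Ioo (0:ℝ) 1,
      ut s y = a s y * uxx s y + b s y * ux s y + c s y * u s y + f s y)
    (ha : 0 ≤ a s x) (hc : c s x ≤ -σ) (hx : x ∈ Ioo 0 1)
    (hmax : IsMaxOn (fun y => |u s y|) (Icc 0 1) x) :
    u s x * ut s x ≤ -σ * u s x ^ 2 + |u s x| * |f s x| := by
  have hnhds : Icc (0:ℝ) 1 ∈ 𝓝 x := Icc_mem_nhds hx.1 hx.2
  have hloc : IsLocalMax (fun y => |u s y|) x := hmax.isLocalMax hnhds
  have hux' : ∀ᶠ y in 𝓝 x, HasDerivAt (u s) (ux s y) y :=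
    eventually_of_mem (Ioo_mem_nhds hx.1 hx.2) hux
  rw [hpde x hx]
  nlinarith [hloc.mul_secondOrder_le_of_abs hux' (huxx x hx) (β := b s x) (γ := c s x)
    (φ := f s x) ha, mul_le_mul_of_nonneg_right hc (sq_nonneg (u s x))]

theorem weighted_rate_le_of_isMaxOn {s x : ℝ}
    (hux : ∀ y ∈ Ioo (0:ℝ) 1, HasDerivAt (u s) (ux s y) y)
    (huxx : ∀ y ∈ Ioo (0:ℝ) 1, HasDerivAt (ux s) (uxx s y) y)
    (hpde : ∀ y ∈ Ioo (0:ℝ) 1,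
      ut s y = a s y * uxx s y + b s y * ux s y + c s y * u s y + f s y)
    (ha : ∀ y ∈ Ioo (0:ℝ) 1, 0 ≤ a s y) (hc : ∀ y ∈ Ioo (0:ℝ) 1, c s y ≤ -σ)
    (h0 : Real.exp (ζ * s) * |u s 0| ≤ K) (h1 : Real.exp (ζ * s) * |u s 1| ≤ K)
    (hf : ∀ y ∈ Ioo (0:ℝ) 1, Real.exp (ζ * s) * |f s y| ≤ (σ - ζ) * K)
    (hx : x ∈ Icc 0 1) (hmax : IsMaxOn (fun y => |u s y|) (Icc 0 1) x)
    (hK : K < Real.exp (ζ * s) * |u s x|) :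
    Real.exp (ζ * s) ^ 2 * (ζ * u s x ^ 2 + u s x * ut s x) ≤
      -(σ - ζ) * (Real.exp (ζ * s) * |u s x|) * (Real.exp (ζ * s) * |u s x| - K) := by
  have hx' : x ∈ Ioo 0 1 := by
    refine ⟨hx.1.lt_of_ne ?_, hx.2.lt_of_ne ?_⟩ <;> rintro rfl <;> linarith
  have hE : 0 < Real.exp (ζ * s) := Real.exp_pos _
  have hrate := mul_ut_le_of_isMaxOn hux huxx hpde (ha x hx') (hc x hx') hx' hmax
  linear_combination mul_le_mul_of_nonneg_left hrate (sq_nonneg (Real.exp (ζ * s))) +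
    mul_le_mul_of_nonneg_left (hf x hx') (mul_nonneg hE.le (abs_nonneg (u s x))) +
    (σ - ζ) * Real.exp (ζ * s) ^ 2 * sq_abs (u s x)

theorem exists_abs_eq_supNormOn_weighted_rate_le
    (hu : ContinuousOn (fun p : ℝ × ℝ => u p.1 p.2) (Icc 0 T ×ˢ Icc 0 1))
    (hut_cont : ContinuousOn (fun p : ℝ × ℝ => ut p.1 p.2) (Ioo 0 T ×ˢ Icc 0 1))
    (hpde : ∀ᵐ t ∂(volume.restrict (Ioo 0 T)),
      (∀ x ∈ Ioo (0:ℝ) 1, HasDerivAt (u t) (ux t x) x) ∧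
      (∀ x ∈ Ioo (0:ℝ) 1, HasDerivAt (ux t) (uxx t x) x) ∧
      (∀ x ∈ Ioo (0:ℝ) 1, ut t x = a t x * uxx t x + b t x * ux t x + c t x * u t x + f t x))
    (ha : ∀ t ∈ Ioo (0:ℝ) T, ∀ x ∈ Ioo (0:ℝ) 1, 0 ≤ a t x)
    (hc : ∀ t ∈ Ioo (0:ℝ) T, ∀ x ∈ Ioo (0:ℝ) 1, c t x ≤ -σ) {t₀ : ℝ} (ht₀ : t₀ ≤ T)
    (h0 : ∀ s ∈ Ioc 0 t₀, Real.exp (ζ * s) * |u s 0| ≤ K)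
    (h1 : ∀ s ∈ Ioc 0 t₀, Real.exp (ζ * s) * |u s 1| ≤ K)
    (hf : ∀ s ∈ Ioc 0 t₀, ∀ x ∈ Ioo (0:ℝ) 1, Real.exp (ζ * s) * |f s x| ≤ (σ - ζ) * K)
    {τ : ℝ} (hτ : τ ∈ Ioo 0 t₀) (hKτ : K < Real.exp (ζ * τ) * supNormOn (Icc 0 1) (u τ)) :
    ∃ x ∈ Icc 0 1, |u τ x| = supNormOn (Icc 0 1) (u τ) ∧
      Real.exp (ζ * τ) ^ 2 * (ζ * u τ x ^ 2 + u τ x * ut τ x) ≤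
        -(σ - ζ) * (Real.exp (ζ * τ) * |u τ x|) * (Real.exp (ζ * τ) * |u τ x| - K) := by
  have hτT : τ ∈ Ioo 0 T := ⟨hτ.1, hτ.2.trans_le ht₀⟩
  have hM : ContinuousOn (fun s => supNormOn (Icc 0 1) (u s)) (Icc 0 T) :=
    continuousOn_supNormOn (hτT.1.trans hτT.2).le zero_le_one hu
  have hMτ := hM.continuousAt (Icc_mem_nhds hτT.1 hτT.2)
  have hm : ContinuousAt (fun s => Real.exp (ζ * s) * supNormOn (Icc 0 1) (u s)) τ :=
    (Real.continuous_exp.comp (continuous_const_mul ζ)).continuousAt.mul hMτ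
  -- times at which the equation holds pointwise, approaching `τ` from the left
  obtain ⟨tseq, htlim, htgood⟩ := frequently_iff_seq_forall.mp <|
    ((frequently_nhdsLT_of_ae_restrict hpde ⟨hτT.1, hτT.2.le⟩).and_eventually
      (nhdsWithin_le_nhds (hm.eventually (lt_mem_nhds hKτ)))).and_eventually
      (Ioo_mem_nhdsLT hτ.1)
  choose xseq hxmem hxmax hxeq using fun n =>
    isCompact_Icc.exists_isMaxOn_abs_eq_supNormOn (nonempty_Icc.mpr zero_le_one)
      (continuousOn_slice hu (Ioo_subset_Icc_self (htgood n).1.1.1))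
  obtain ⟨xs, hxs, φ, hφ, hxlim⟩ := isCompact_Icc.tendsto_subseq hxmem
  have htlim' : Tendsto (fun n => tseq (φ n)) atTop (𝓝 τ) :=
    (tendsto_nhds_of_tendsto_nhdsWithin htlim).comp hφ.tendsto_atTop
  have hplim : Tendsto (fun n => (tseq (φ n), xseq (φ n))) atTop
      (𝓝[Ioo 0 T ×ˢ Icc 0 1] (τ, xs)) :=
    tendsto_nhdsWithin_iff.mpr ⟨htlim'.prodMk_nhds hxlim,
      Eventually.of_forall fun n => ⟨(htgood (φ n)).1.1.1, hxmem _⟩⟩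
  have hulim : Tendsto (fun n => u (tseq (φ n)) (xseq (φ n))) atTop (𝓝 (u τ xs)) :=
    ((hu (τ, xs) ⟨Ioo_subset_Icc_self hτT, hxs⟩).mono
      (prod_mono Ioo_subset_Icc_self subset_rfl)).tendsto.comp hplim
  have hutlim : Tendsto (fun n => ut (tseq (φ n)) (xseq (φ n))) atTop (𝓝 (ut τ xs)) :=
    (hut_cont (τ, xs) ⟨hτT, hxs⟩).tendsto.comp hplim
  have hexplim : Tendsto (fun n => Real.exp (ζ * tseq (φ n))) atTop (𝓝 (Real.exp (ζ * τ))) :=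
    (Real.continuous_exp.tendsto _).comp (htlim'.const_mul ζ)
  have habs : |u τ xs| = supNormOn (Icc 0 1) (u τ) :=
    tendsto_nhds_unique (hulim.abs.congr fun n => hxeq (φ n)) (hMτ.tendsto.comp htlim')
  refine ⟨xs, hxs, habs, le_of_tendsto_of_tendsto'
    ((hexplim.pow 2).mul ((hulim.pow 2).const_mul ζ |>.add (hulim.mul hutlim)))
    (((hexplim.mul hulim.abs).const_mul _).mul ((hexplim.mul hulim.abs).sub_const K))
    fun n => ?_⟩
  obtain ⟨⟨⟨hsT, hux, huxx, hpde⟩, hKs⟩, hsτ⟩ := htgood (φ n)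
  have hs : tseq (φ n) ∈ Ioc 0 t₀ := ⟨hsT.1, hsτ.2.le.trans hτ.2.le⟩
  exact weighted_rate_le_of_isMaxOn hux huxx hpde (ha _ hsT) (hc _ hsT) (h0 _ hs) (h1 _ hs)
    (hf _ hs) (hxmem _) (hxmax _) (hxeq (φ n) ▸ hKs)

theorem weighted_supNormOn_le
    (hu : ContinuousOn (fun p : ℝ × ℝ => u p.1 p.2) (Icc 0 T ×ˢ Icc 0 1))
    (hut : ∀ t ∈ Ioo (0:ℝ) T, ∀ x ∈ Icc (0:ℝ) 1, HasDerivAt (fun τ => u τ x) (ut t x) t)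
    (hut_cont : ContinuousOn (fun p : ℝ × ℝ => ut p.1 p.2) (Ioo 0 T ×ˢ Icc 0 1))
    (hpde : ∀ᵐ t ∂(volume.restrict (Ioo 0 T)),
      (∀ x ∈ Ioo (0:ℝ) 1, HasDerivAt (u t) (ux t x) x) ∧
      (∀ x ∈ Ioo (0:ℝ) 1, HasDerivAt (ux t) (uxx t x) x) ∧
      (∀ x ∈ Ioo (0:ℝ) 1, ut t x = a t x * uxx t x + b t x * ux t x + c t x * u t x + f t x))
    (ha : ∀ t ∈ Ioo (0:ℝ) T, ∀ x ∈ Ioo (0:ℝ) 1, 0 ≤ a t x)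
    (hc : ∀ t ∈ Ioo (0:ℝ) T, ∀ x ∈ Ioo (0:ℝ) 1, c t x ≤ -σ) (hζσ : ζ < σ)
    {t₀ : ℝ} (ht₀ : t₀ ≤ T) (hinit : supNormOn (Icc 0 1) (u 0) ≤ K)
    (h0 : ∀ s ∈ Ioc 0 t₀, Real.exp (ζ * s) * |u s 0| ≤ K)
    (h1 : ∀ s ∈ Ioc 0 t₀, Real.exp (ζ * s) * |u s 1| ≤ K)
    (hf : ∀ s ∈ Ioc 0 t₀, ∀ x ∈ Ioo (0:ℝ) 1, Real.exp (ζ * s) * |f s x| ≤ (σ - ζ) * K) :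
    ∀ s ∈ Icc 0 t₀, Real.exp (ζ * s) * supNormOn (Icc 0 1) (u s) ≤ K := by
  have hK : 0 ≤ K := (supNormOn_nonneg _ _).trans hinit
  have hm_nonneg : ∀ s, 0 ≤ Real.exp (ζ * s) * supNormOn (Icc 0 1) (u s) :=
    fun s => mul_nonneg (Real.exp_pos _).le (supNormOn_nonneg _ _)
  refine le_of_forall_frequently_nhdsLT_lt ?_ (by simpa using hinit) fun τ hτ hKτ => ?_
  · refine (Real.continuous_exp.comp (continuous_const_mul ζ)).continuousOn.mul ?_
    rcases lt_or_ge t₀ 0 with ht₀0 | ht₀0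
    · simp [Icc_eq_empty_of_lt ht₀0]
    · exact (continuousOn_supNormOn (ht₀0.trans ht₀) zero_le_one hu).mono
        (Icc_subset_Icc_right ht₀)
  obtain ⟨x, hx, habs, hrate⟩ :=
    exists_abs_eq_supNormOn_weighted_rate_le hu hut_cont hpde ha hc ht₀ h0 h1 hf hτ hKτ
  rw [← habs] at hKτ ⊢
  -- `s ↦ (e^{ζ s} u(s, x))²` touches the squared weighted norm from below at `τ`
  -- and is strictly decreasing there, so the weighted norm was larger just before `τ`
  have hderiv : HasDerivAt (fun s => (Real.exp (ζ * s) * u s x) ^ 2)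
      (2 * (Real.exp (ζ * τ) ^ 2 * (ζ * u τ x ^ 2 + u τ x * ut τ x))) τ := by
    refine ((((hasDerivAt_id τ).const_mul ζ).exp.mul
      (hut τ ⟨hτ.1, hτ.2.trans_le ht₀⟩ x hx)).fun_pow 2).congr_deriv ?_
    simp only [id, Pi.mul_apply]
    ring
  have hneg : 2 * (Real.exp (ζ * τ) ^ 2 * (ζ * u τ x ^ 2 + u τ x * ut τ x)) < 0 := by
    nlinarith [mul_pos (sub_pos.mpr hζσ) (mul_pos (hK.trans_lt hKτ) (sub_pos.mpr hKτ))]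
  have hle : ∀ᶠ s in 𝓝[<] τ, (Real.exp (ζ * s) * u s x) ^ 2 ≤
      (Real.exp (ζ * s) * supNormOn (Icc 0 1) (u s)) ^ 2 := by
    filter_upwards [Ioo_mem_nhdsLT hτ.1] with s hs
    have hsT : s ∈ Icc 0 T := ⟨hs.1.le, (hs.2.trans hτ.2).le.trans ht₀⟩
    rw [← sq_abs, abs_mul, abs_of_pos (Real.exp_pos _)]
    exact pow_le_pow_left₀ (by positivity) (mul_le_mul_of_nonneg_left (abs_le_supNormOn
      (isCompact_Icc.bddAbove_image (continuousOn_slice hu hsT).abs) hx) (Real.exp_pos _).le) 2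
  have heq : (Real.exp (ζ * τ) * u τ x) ^ 2 = (Real.exp (ζ * τ) * |u τ x|) ^ 2 := by
    rw [mul_pow, mul_pow, sq_abs]
  refine ((hderiv.eventually_nhdsLT_lt_of_le hneg hle (habs ▸ heq)).mono fun s hs => ?_).frequently
  exact (pow_lt_pow_iff_left₀ (habs ▸ hm_nonneg τ) (hm_nonneg s) two_ne_zero).mp (habs ▸ hs)

theorem bddAbove_boundary_forcing {t Mf : ℝ}
    (hu : ContinuousOn (fun p : ℝ × ℝ => u p.1 p.2) (Icc 0 T ×ˢ Icc 0 1))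
    (hf : ∀ s ∈ Ioc (0:ℝ) T, ∀ x ∈ Ioo (0:ℝ) 1, |f s x| ≤ Mf) (hζ : 0 ≤ ζ) (hσζ : 0 < σ - ζ)
    (ht : t ≤ T) :
    BddAbove ((fun s => max (max |u s 0| |u s 1|) (supNormOn (Ioo 0 1) (f s) / (σ - ζ)) *
      Real.exp (-ζ * (t - s))) '' Ioc 0 t) := by
  obtain ⟨Cu, hCu⟩ := (isCompact_Icc.prod isCompact_Icc).exists_bound_of_continuousOn hu
  refine bddAbove_image_mul_exp_neg (C := max Cu (Mf / (σ - ζ))) hζ fun s hs => ?_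
  have hsT : s ∈ Ioc 0 T := ⟨hs.1, hs.2.trans ht⟩
  refine ⟨(abs_nonneg _).trans ((le_max_left _ _).trans (le_max_left _ _)), ?_⟩
  refine max_le_max (max_le (hCu (s, 0) ⟨Ioc_subset_Icc_self hsT, by simp⟩)
    (hCu (s, 1) ⟨Ioc_subset_Icc_self hsT, by simp⟩)) ?_
  exact div_le_div_of_nonneg_right (supNormOn_le ⟨1/2, by norm_num⟩ (hf s hsT)) hσζ.le

end MaximumPrinciple

theorem lem4_3_general
    (T : ℝ)
    (a b c f : ℝ → ℝ → ℝ)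
    (hf_bdd : ∃ M : ℝ, ∀ t ∈ Set.Ioc (0:ℝ) T, ∀ x ∈ Set.Ioo (0:ℝ) 1, |f t x| ≤ M)
    (u ut ux uxx : ℝ → ℝ → ℝ)
    (hu_cont : ContinuousOn (fun p : ℝ × ℝ => u p.1 p.2) (Set.Icc 0 T ×ˢ Set.Icc 0 1))
    (hut : ∀ t ∈ Set.Ioo (0:ℝ) T, ∀ x ∈ Set.Icc (0:ℝ) 1,
      HasDerivAt (fun τ => u τ x) (ut t x) t)
    (hut_cont : ContinuousOn (fun p : ℝ × ℝ => ut p.1 p.2) (Set.Ioo 0 T ×ˢ Set.Icc 0 1))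
    (hC2_pde : ∀ᵐ t ∂(volume.restrict (Set.Ioo 0 T)),
      (∀ x ∈ Set.Ioo (0:ℝ) 1, HasDerivAt (u t) (ux t x) x) ∧
      (∀ x ∈ Set.Ioo (0:ℝ) 1, HasDerivAt (ux t) (uxx t x) x) ∧
      ContinuousOn (uxx t) (Set.Ioo 0 1) ∧
      (∀ x ∈ Set.Ioo (0:ℝ) 1,
        ut t x = a t x * uxx t x + b t x * ux t x + c t x * u t x + f t x))
    (ha : ∀ t ∈ Set.Ioo (0:ℝ) T, ∀ x ∈ Set.Ioo (0:ℝ) 1, 0 ≤ a t x)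
    (σ : ℝ)
    (hσ_def : σ = - sSup ((fun p : ℝ × ℝ => c p.1 p.2) '' (Set.Ioo 0 T ×ˢ Set.Ioo 0 1))) :
    ∀ ζ ∈ Set.Ico (0:ℝ) σ, ∀ t ∈ Set.Ioc (0:ℝ) T,
      sSup ((fun x => |u t x|) '' Set.Icc 0 1) ≤
        max (Real.exp (-ζ * t) * sSup ((fun x => |u 0 x|) '' Set.Icc 0 1))
          (sSup ((fun s =>
              max (max (|u s 0|) (|u s 1|))
                (sSup ((fun x => |f s x|) '' Set.Ioo 0 1) / (σ - ζ)) *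
              Real.exp (-ζ * (t - s))) '' Set.Ioc 0 t)) := by
  rintro ζ ⟨hζ0, hζσ⟩ t ⟨ht0, htT⟩
  have hσζ : 0 < σ - ζ := sub_pos.mpr hζσ
  obtain ⟨Mf, hMf⟩ := hf_bdd
  set H := fun s => max (max |u s 0| |u s 1|) (supNormOn (Ioo 0 1) (f s) / (σ - ζ))
  set R := max (Real.exp (-ζ * t) * supNormOn (Icc 0 1) (u 0))
    (sSup ((fun s => H s * Real.exp (-ζ * (t - s))) '' Ioc 0 t))
  have hweight : ∀ s ∈ Ioc 0 t, ∀ y ≤ H s, Real.exp (ζ * s) * y ≤ Real.exp (ζ * t) * R :=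
    fun s hs y hy => exp_mul_le_exp_mul_of_mul_exp_neg_le hy <| le_max_of_le_right <|
      le_csSup (bddAbove_boundary_forcing hu_cont hMf hζ0 hσζ htT) (mem_image_of_mem _ hs)
  have hinit : supNormOn (Icc 0 1) (u 0) ≤ Real.exp (ζ * t) * R := by
    have h := mul_le_mul_of_nonneg_left (le_max_left _ _ : _ ≤ R) (Real.exp_pos (ζ * t)).le
    have he : Real.exp (ζ * t) * Real.exp (-ζ * t) = 1 := by rw [← Real.exp_add]; simp
    rwa [← mul_assoc, he, one_mul] at h
  have hforcing : ∀ s ∈ Ioc 0 t, ∀ x ∈ Ioo (0:ℝ) 1,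
      Real.exp (ζ * s) * |f s x| ≤ (σ - ζ) * (Real.exp (ζ * t) * R) := by
    intro s hs x hx
    have hfx := abs_le_supNormOn ⟨Mf, forall_mem_image.mpr (hMf s ⟨hs.1, hs.2.trans htT⟩)⟩ hx
    have := hweight s hs _ (le_max_of_le_right (div_le_div_of_nonneg_right hfx hσζ.le))
    rw [mul_div_assoc', div_le_iff₀ hσζ] at this
    linarith
  have key := weighted_supNormOn_le hu_cont hut hut_cont
    (hC2_pde.mono fun _ h => ⟨h.1, h.2.1, h.2.2.2⟩) ha
    (fun s hs x hx => le_neg_of_eq_neg_sSup_image hσ_def (hζ0.trans_lt hζσ) (s, x) ⟨hs, hx⟩)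
    hζσ htT hinit (fun s hs => hweight s hs _ ((le_max_left _ _).trans (le_max_left _ _)))
    (fun s hs => hweight s hs _ ((le_max_right _ _).trans (le_max_left _ _))) hforcing
    t ⟨ht0.le, le_rfl⟩
  exact le_of_mul_le_mul_left key (Real.exp_pos _)

/-- **Lemma 4.3** (Karafyllis–Krstic): unweighted ISS-style maximum principle estimate
under the sign condition `σ = -sup c > 0`. -/
theorem lem4_3
    (T : ℝ) (hT : 0 < T)
    (a b c f : ℝ → ℝ → ℝ)
    (hf_bdd : ∃ M : ℝ, ∀ t ∈ Set.Ioc (0:ℝ) T, ∀ x ∈ Set.Ioo (0:ℝ) 1, |f t x| ≤ M)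
    (u ut ux uxx : ℝ → ℝ → ℝ)
    (hu_cont : ContinuousOn (fun p : ℝ × ℝ => u p.1 p.2) (Set.Icc 0 T ×ˢ Set.Icc 0 1))
    (hut : ∀ t ∈ Set.Ioo (0:ℝ) T, ∀ x ∈ Set.Icc (0:ℝ) 1,
      HasDerivAt (fun τ => u τ x) (ut t x) t)
    (hut_cont : ContinuousOn (fun p : ℝ × ℝ => ut p.1 p.2) (Set.Ioo 0 T ×ˢ Set.Icc 0 1))
    (hC2_pde : ∀ᵐ t ∂(volume.restrict (Set.Ioo 0 T)),
      (∀ x ∈ Set.Ioo (0:ℝ) 1, HasDerivAt (u t) (ux t x) x) ∧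
      (∀ x ∈ Set.Ioo (0:ℝ) 1, HasDerivAt (ux t) (uxx t x) x) ∧
      ContinuousOn (uxx t) (Set.Ioo 0 1) ∧
      (∀ x ∈ Set.Ioo (0:ℝ) 1,
        ut t x = a t x * uxx t x + b t x * ux t x + c t x * u t x + f t x))
    (ha : ∀ t ∈ Set.Ioo (0:ℝ) T, ∀ x ∈ Set.Ioo (0:ℝ) 1, 0 ≤ a t x)
    (σ : ℝ)
    (hσ_def : σ = - sSup ((fun p : ℝ × ℝ => c p.1 p.2) '' (Set.Ioo 0 T ×ˢ Set.Ioo 0 1)))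
    (hσ : 0 < σ) :
    ∀ ζ ∈ Set.Ico (0:ℝ) σ, ∀ t ∈ Set.Ioc (0:ℝ) T,
      sSup ((fun x => |u t x|) '' Set.Icc 0 1) ≤
        max (Real.exp (-ζ * t) * sSup ((fun x => |u 0 x|) '' Set.Icc 0 1))
          (sSup ((fun s =>
              max (max (|u s 0|) (|u s 1|))
                (sSup ((fun x => |f s x|) '' Set.Ioo 0 1) / (σ - ζ)) *
              Real.exp (-ζ * (t - s))) '' Set.Ioc 0 t)) :=
  lem4_3_general T a b c f hf_bdd u ut ux uxx hu_cont hut hut_cont hC2_pde ha σ hσ_def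
end

section
/- Consider the nonlinear reaction-diffusion PDE ∂u/∂t(t,x) = κ(u(t,x))·∂²u/∂x²(t,x) + r(u(t,x))·u(t,x) + f(t,x) on (0,T] × [0,1] with Dirichlet boundary conditions u(t,0) = d₀(t), u(t,1) = d₁(t) for t ∈ [0,T], where d₀, d₁ ∈ C⁰([0,T]), f ∈ C⁰([0,T] × [0,1]), and κ, r ∈ C⁰(ℝ) satisfy κ(u) > 0 for all u ∈ ℝ and sup{ (σ + r(u))/κ(u) : u ∈ ℝ } < π² for a constant σ > 0. Then there exist constants θ ∈ (0,π) and φ > 0 with θ + φ < π such that, with η(x) := sin(θx + φ), every classical solution u ∈ C⁰([0,T] × [0,1]) ∩ C¹((0,T] × [0,1]) with u[t] ∈ C²([0,1]) for t ∈ (0,T] satisfies, for all ζ ∈ [0,σ) and t ∈ (0,T]: ‖u[t]‖_{∞,η} ≤ max( exp(−ζt)·‖u[0]‖_{∞,η}, sup_{0<s≤t} max( |d₀(s)|/η(0), |d₁(s)|/η(1), ‖f[s]‖_{∞,η}/(σ−ζ) )·exp(−ζ(t−s)) ). -/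
/-!
With `θ ^ 2 ≥ sup (σ + r) / κ`, the weight `η x = sin (θ x + φ)` satisfies
`κ(v) η'' + (r(v) + σ) η ≤ 0` for every `v`, i.e. it is a strict supersolution of the equation
linearised with frozen coefficients `κ(u(t,x))`, `r(u(t,x))`. After the substitution
`w = e^{ζt} u`, which replaces `r` by `r + ζ` and `σ` by `σ - ζ`, consider the maximum of `w / η`
over `[0,t] × [0,1]`. If it is attained in the interior, the first-order condition in time gives
`w_t ≥ 0` and the second-order condition in space gives `w_xx ≤ (w / η) η''`; inserted into the
equation this bounds the maximum by the forcing. Otherwise it is attained on the parabolic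
boundary and is bounded by the initial and boundary data. The same applies to `-u`.
-/

open Set Filter Topology Real

theorem IsLocalMax.hasDerivAt_deriv_nonpos {f f' : ℝ → ℝ} {a f'' : ℝ} (h : IsLocalMax f a)
    (hf : ∀ᶠ x in 𝓝 a, HasDerivAt f (f' x) x) (hf' : HasDerivAt f' f'' a) : f'' ≤ 0 := by
  by_contra! hpos
  have hzero : f' a = 0 := h.hasDerivAt_eq_zero hf.self_of_nhds
  have hsign : ∀ᶠ x in 𝓝 a, SignType.sign (f' x) = SignType.sign (x - a) :=
    eventually_nhdsWithin_sign_eq_of_deriv_pos (by rwa [hf'.deriv]) hzero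
  have hmin : IsLocalMin f a :=
    isLocalMin_of_sign_deriv hf.self_of_nhds.continuousAt <| nhdsWithin_le_nhds <| by
      filter_upwards [hsign, hf] with x hs hd
      rw [hd.deriv, hs]
  have hconst : ∀ᶠ x in 𝓝 a, f x = f a := by
    filter_upwards [hmin, h] with x h₁ h₂ using le_antisymm h₂ h₁
  have hf'_zero : f' =ᶠ[𝓝 a] fun _ => 0 := by
    filter_upwards [hconst.eventually_nhds, hf] with x hx hd
    exact hd.unique ((hasDerivAt_const x (f a)).congr_of_eventuallyEq hx)
  exact hpos.ne' (hf'.unique ((hasDerivAt_const a 0).congr_of_eventuallyEq hf'_zero))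

theorem IsMaxOn.hasDerivWithinAt_nonneg_of_mem_Ioc {g : ℝ → ℝ} {a b t d : ℝ} (ht : t ∈ Ioc a b)
    (h : IsMaxOn g (Ioc a b) t) (hg : HasDerivWithinAt g d (Ioc a b) t) : 0 ≤ d := by
  have hseg : segment ℝ t ((a + t) / 2) ⊆ Ioc a b := by
    rw [segment_symm, segment_eq_Icc (by linarith [ht.1])]
    exact fun y hy => ⟨by linarith [hy.1, ht.1], hy.2.trans ht.2⟩
  have := h.localize.hasFDerivWithinAt_nonpos hg.hasFDerivWithinAt
    (sub_mem_posTangentConeAt_of_segment_subset hseg)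
  simp only [ContinuousLinearMap.toSpanSingleton_apply, smul_eq_mul] at this
  nlinarith [ht.1]

theorem exists_mem_Ioo_pi_le_sq {K : ℝ} (hK : K < π ^ 2) : ∃ θ ∈ Ioo 0 π, K ≤ θ ^ 2 := by
  have hρ₀ := Real.sqrt_nonneg (max K 0)
  have hρ : √(max K 0) < π := (Real.sqrt_lt' pi_pos).2 (max_lt hK (by positivity))
  refine ⟨(√(max K 0) + π) / 2, ⟨by linarith [pi_pos], by linarith⟩, ?_⟩
  calc K ≤ max K 0 := le_max_left _ _
    _ = √(max K 0) ^ 2 := (Real.sq_sqrt (le_max_right _ _)).symm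
    _ ≤ ((√(max K 0) + π) / 2) ^ 2 := pow_le_pow_left₀ hρ₀ (by linarith) 2

theorem exp_mul_le_of_mul_exp_le {B M ζ s t : ℝ} (h : B * exp (-ζ * (t - s)) ≤ M) :
    exp (ζ * s) * B ≤ M * exp (ζ * t) := by
  have : exp (ζ * s) * B = B * exp (-ζ * (t - s)) * exp (ζ * t) := by
    rw [mul_assoc, ← Real.exp_add]; ring_nf
  exact this ▸ mul_le_mul_of_nonneg_right h (exp_pos _).le

theorem bddAbove_mul_exp_image {B : ℝ → ℝ} {C ζ t : ℝ} (hζ : 0 ≤ ζ)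
    (hB : ∀ s ∈ Ioc 0 t, 0 ≤ B s ∧ B s ≤ C) :
    BddAbove ((fun s => B s * exp (-ζ * (t - s))) '' Ioc 0 t) :=
  ⟨C, forall_mem_image.2 fun s hs => (mul_le_of_le_one_right (hB s hs).1
    (exp_le_one_iff.2 (by nlinarith [hs.2]))).trans (hB s hs).2⟩

/-- The weighted sup norm `‖g‖_{∞,η}` over `s`. Since `sSup` of a set that is not bounded above
is `0`, lemmas about it carry a `BddAbove` hypothesis. -/
noncomputable def weightedSup (η g : ℝ → ℝ) (s : Set ℝ) : ℝ := sSup ((fun x => |g x| / η x) '' s)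

theorem abs_le_weightedSup_mul {η g : ℝ → ℝ} {s : Set ℝ} {x : ℝ}
    (hbdd : BddAbove ((fun x => |g x| / η x) '' s)) (hx : x ∈ s) (hη : 0 < η x) :
    |g x| ≤ weightedSup η g s * η x :=
  (div_le_iff₀ hη).1 (le_csSup hbdd (mem_image_of_mem _ hx))

theorem weightedSup_le {η g : ℝ → ℝ} {s : Set ℝ} {M : ℝ} (hs : s.Nonempty)
    (hη : ∀ x ∈ s, 0 < η x) (h : ∀ x ∈ s, |g x| ≤ M * η x) : weightedSup η g s ≤ M :=
  csSup_le (hs.image _) (forall_mem_image.2 fun x hx => (div_le_iff₀ (hη x hx)).2 (h x hx))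

theorem exists_forall_abs_div_le {T : ℝ} {f : ℝ → ℝ → ℝ} {η : ℝ → ℝ}
    (hf : ContinuousOn (fun p : ℝ × ℝ => f p.1 p.2) (Icc 0 T ×ˢ Icc 0 1))
    (hη : ∀ x ∈ Icc (0:ℝ) 1, 0 < η x) (hηc : ContinuousOn η (Icc 0 1)) :
    ∃ C, ∀ s ∈ Icc 0 T, ∀ x ∈ Icc (0:ℝ) 1, |f s x| / η x ≤ C := by
  obtain ⟨C, hC⟩ := (isCompact_Icc.prod isCompact_Icc).bddAbove_image
    (f := fun p : ℝ × ℝ => |f p.1 p.2| / η p.2)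
    (hf.abs.div (hηc.comp continuous_snd.continuousOn fun p hp => hp.2) fun p hp =>
      (hη _ hp.2).ne')
  exact ⟨C, fun s hs x hx => hC (mem_image_of_mem _ (mk_mem_prod hs hx))⟩

noncomputable def inputSize (η : ℝ → ℝ) (c : ℝ) (d₀ d₁ : ℝ → ℝ) (f : ℝ → ℝ → ℝ) (s : ℝ) : ℝ :=
  max (max (|d₀ s| / η 0) (|d₁ s| / η 1)) (weightedSup η (f s) (Ioo 0 1) / c)

section inputSize

variable {η : ℝ → ℝ} {c : ℝ} {d₀ d₁ : ℝ → ℝ} {f : ℝ → ℝ → ℝ} {s : ℝ}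

theorem inputSize_nonneg (hη : 0 < η 0) : 0 ≤ inputSize η c d₀ d₁ f s :=
  (div_nonneg (abs_nonneg _) hη.le).trans ((le_max_left _ _).trans (le_max_left _ _))

theorem abs_left_le_inputSize_mul (hη : 0 < η 0) : |d₀ s| ≤ inputSize η c d₀ d₁ f s * η 0 :=
  (div_le_iff₀ hη).1 ((le_max_left _ _).trans (le_max_left _ _))

theorem abs_right_le_inputSize_mul (hη : 0 < η 1) : |d₁ s| ≤ inputSize η c d₀ d₁ f s * η 1 :=
  (div_le_iff₀ hη).1 ((le_max_right _ _).trans (le_max_left _ _))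

theorem abs_forcing_le_inputSize_mul (hc : 0 < c)
    (hbdd : BddAbove ((fun x => |f s x| / η x) '' Ioo 0 1)) {x : ℝ} (hx : x ∈ Ioo (0:ℝ) 1)
    (hηx : 0 < η x) : |f s x| ≤ c * inputSize η c d₀ d₁ f s * η x := by
  have hsup : weightedSup η (f s) (Ioo 0 1) ≤ c * inputSize η c d₀ d₁ f s :=
    (div_le_iff₀' hc).1 (le_max_right _ _)
  exact (abs_le_weightedSup_mul hbdd hx hηx).trans (mul_le_mul_of_nonneg_right hsup hηx.le)

end inputSize

theorem exists_forall_inputSize_le {T c : ℝ} {d₀ d₁ : ℝ → ℝ} {f : ℝ → ℝ → ℝ} {η : ℝ → ℝ}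
    (hd₀ : ContinuousOn d₀ (Icc 0 T)) (hd₁ : ContinuousOn d₁ (Icc 0 T))
    (hf : ContinuousOn (fun p : ℝ × ℝ => f p.1 p.2) (Icc 0 T ×ˢ Icc 0 1))
    (hη : ∀ x ∈ Icc (0:ℝ) 1, 0 < η x) (hηc : ContinuousOn η (Icc 0 1)) (hc : 0 ≤ c) :
    ∃ C, ∀ s ∈ Icc 0 T, inputSize η c d₀ d₁ f s ≤ C := by
  obtain ⟨C₀, hC₀⟩ := isCompact_Icc.exists_bound_of_continuousOn hd₀
  obtain ⟨C₁, hC₁⟩ := isCompact_Icc.exists_bound_of_continuousOn hd₁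
  obtain ⟨C, hC⟩ := exists_forall_abs_div_le hf hη hηc
  have hη₀ := hη 0 (left_mem_Icc.2 zero_le_one)
  have hη₁ := hη 1 (right_mem_Icc.2 zero_le_one)
  refine ⟨max (max (C₀ / η 0) (C₁ / η 1)) (C / c), fun s hs => ?_⟩
  have hsup : weightedSup η (f s) (Ioo 0 1) ≤ C :=
    csSup_le ((nonempty_Ioo.2 zero_lt_one).image _)
      (forall_mem_image.2 fun x hx => hC s hs x (Ioo_subset_Icc_self hx))
  exact max_le_max (max_le_max (div_le_div_of_nonneg_right (hC₀ s hs) hη₀.le)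
    (div_le_div_of_nonneg_right (hC₁ s hs) hη₁.le)) (div_le_div_of_nonneg_right hsup hc)

/-- The coefficients depend on `(t, x)`, so that the quasilinear equation
`u_t = κ(u) u_xx + r(u) u + f` is the case `a = κ ∘ u`, `b = r ∘ u`. -/
structure IsClassicalSolution (T : ℝ) (a b f u ut ux uxx : ℝ → ℝ → ℝ) : Prop where
  continuousOn : ContinuousOn (fun p : ℝ × ℝ => u p.1 p.2) (Icc 0 T ×ˢ Icc 0 1)
  hasDerivWithinAt_time : ∀ t ∈ Ioc 0 T, ∀ x ∈ Icc (0:ℝ) 1,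
    HasDerivWithinAt (fun τ => u τ x) (ut t x) (Ioc 0 T) t
  hasDerivWithinAt_space : ∀ t ∈ Ioc 0 T, ∀ x ∈ Icc (0:ℝ) 1,
    HasDerivWithinAt (u t) (ux t x) (Icc 0 1) x
  hasDerivWithinAt_space₂ : ∀ t ∈ Ioc 0 T, ∀ x ∈ Icc (0:ℝ) 1,
    HasDerivWithinAt (ux t) (uxx t x) (Icc 0 1) x
  eq : ∀ t ∈ Ioc 0 T, ∀ x ∈ Icc (0:ℝ) 1, ut t x = a t x * uxx t x + b t x * u t x + f t x

structure IsSupersolutionWeight (T σ : ℝ) (a b : ℝ → ℝ → ℝ) (η η' η'' : ℝ → ℝ) : Prop where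
  pos : ∀ x ∈ Icc (0:ℝ) 1, 0 < η x
  continuousOn : ContinuousOn η (Icc 0 1)
  hasDerivAt : ∀ x ∈ Ioo (0:ℝ) 1, HasDerivAt η (η' x) x
  hasDerivAt_deriv : ∀ x ∈ Ioo (0:ℝ) 1, HasDerivAt η' (η'' x) x
  supersolution : ∀ t ∈ Ioc 0 T, ∀ x ∈ Ioo (0:ℝ) 1, a t x * η'' x + (b t x + σ) * η x ≤ 0

theorem IsSupersolutionWeight.add_coeff {T σ : ℝ} {a b : ℝ → ℝ → ℝ} {η η' η'' : ℝ → ℝ}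
    (hη : IsSupersolutionWeight T σ a b η η' η'') (ζ : ℝ) :
    IsSupersolutionWeight T (σ - ζ) a (fun t x => b t x + ζ) η η' η'' :=
  { hη with
    supersolution := fun t ht x hx => by
      linarith [hη.supersolution t ht x hx] }

theorem isSupersolutionWeight_sin {T σ θ φ : ℝ} {a b : ℝ → ℝ → ℝ} (hθ : 0 ≤ θ) (hφ : 0 < φ)
    (hθφ : θ + φ < π) (hab : ∀ t ∈ Ioc 0 T, ∀ x ∈ Ioo (0:ℝ) 1, σ + b t x ≤ θ ^ 2 * a t x) :
    IsSupersolutionWeight T σ a b (fun x => sin (θ * x + φ)) (fun x => θ * cos (θ * x + φ))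
      (fun x => -(θ ^ 2 * sin (θ * x + φ))) := by
  have hlin (x : ℝ) : HasDerivAt (fun y => θ * y + φ) θ x := by
    simpa using ((hasDerivAt_id x).const_mul θ).add_const φ
  have hpos (x : ℝ) (hx : x ∈ Icc (0:ℝ) 1) : 0 < sin (θ * x + φ) :=
    sin_pos_of_pos_of_lt_pi (by nlinarith [hx.1]) (by nlinarith [hx.2])
  refine ⟨hpos, by fun_prop, fun x _ => ?_, fun x _ => ?_, fun t ht x hx => ?_⟩
  · exact ((hlin x).sin).congr_deriv (mul_comm _ _)
  · exact (((hlin x).cos).const_mul θ).congr_deriv (by ring)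
  · nlinarith [hpos x (Ioo_subset_Icc_self hx), hab t ht x hx]

namespace IsClassicalSolution

variable {T σ : ℝ} {a b f u ut ux uxx : ℝ → ℝ → ℝ} {η η' η'' : ℝ → ℝ}

theorem mono (hu : IsClassicalSolution T a b f u ut ux uxx) {T' : ℝ} (hT : T' ≤ T) :
    IsClassicalSolution T' a b f u ut ux uxx where
  continuousOn := hu.continuousOn.mono (prod_mono (Icc_subset_Icc_right hT) subset_rfl)
  hasDerivWithinAt_time t ht x hx :=
    (hu.hasDerivWithinAt_time t (Ioc_subset_Ioc_right hT ht) x hx).mono (Ioc_subset_Ioc_right hT)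
  hasDerivWithinAt_space t ht := hu.hasDerivWithinAt_space t (Ioc_subset_Ioc_right hT ht)
  hasDerivWithinAt_space₂ t ht := hu.hasDerivWithinAt_space₂ t (Ioc_subset_Ioc_right hT ht)
  eq t ht := hu.eq t (Ioc_subset_Ioc_right hT ht)

theorem neg (hu : IsClassicalSolution T a b f u ut ux uxx) :
    IsClassicalSolution T a b (fun t x => -f t x) (fun t x => -u t x) (fun t x => -ut t x)
      (fun t x => -ux t x) (fun t x => -uxx t x) where
  continuousOn := hu.continuousOn.neg
  hasDerivWithinAt_time t ht x hx := (hu.hasDerivWithinAt_time t ht x hx).neg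
  hasDerivWithinAt_space t ht x hx := (hu.hasDerivWithinAt_space t ht x hx).neg
  hasDerivWithinAt_space₂ t ht x hx := (hu.hasDerivWithinAt_space₂ t ht x hx).neg
  eq t ht x hx := by rw [hu.eq t ht x hx]; ring

theorem exp_mul (hu : IsClassicalSolution T a b f u ut ux uxx) (ζ : ℝ) :
    IsClassicalSolution T a (fun t x => b t x + ζ) (fun t x => exp (ζ * t) * f t x)
      (fun t x => exp (ζ * t) * u t x) (fun t x => exp (ζ * t) * ut t x + ζ * exp (ζ * t) * u t x)
      (fun t x => exp (ζ * t) * ux t x) (fun t x => exp (ζ * t) * uxx t x) where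
  continuousOn :=
    (continuous_exp.comp (continuous_const.mul continuous_fst)).continuousOn.mul hu.continuousOn
  hasDerivWithinAt_time t ht x hx := by
    have hexp : HasDerivAt (fun τ => exp (ζ * τ)) (exp (ζ * t) * ζ) t := by
      simpa using ((hasDerivAt_id t).const_mul ζ).exp
    exact (hexp.hasDerivWithinAt.mul (hu.hasDerivWithinAt_time t ht x hx)).congr_deriv (by ring)
  hasDerivWithinAt_space t ht x hx := (hu.hasDerivWithinAt_space t ht x hx).const_mul _
  hasDerivWithinAt_space₂ t ht x hx := (hu.hasDerivWithinAt_space₂ t ht x hx).const_mul _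
  eq t ht x hx := by rw [hu.eq t ht x hx]; ring

theorem le_forcing_of_touch (hu : IsClassicalSolution T a b f u ut ux uxx)
    (hη : IsSupersolutionWeight T σ a b η η' η'')
    (ha : ∀ t ∈ Ioc 0 T, ∀ x ∈ Ioo (0:ℝ) 1, 0 ≤ a t x) {t x c : ℝ} (ht : t ∈ Ioc 0 T)
    (hx : x ∈ Ioo (0:ℝ) 1) (hc : 0 ≤ c) (hspace : ∀ y ∈ Ioo (0:ℝ) 1, u t y ≤ c * η y)
    (htouch : u t x = c * η x) (htime : IsMaxOn (fun s => u s x) (Ioc 0 T) t) :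
    σ * (c * η x) ≤ f t x := by
  have hxI : x ∈ Icc (0:ℝ) 1 := Ioo_subset_Icc_self hx
  have hnhds : Ioo (0:ℝ) 1 ∈ 𝓝 x := isOpen_Ioo.mem_nhds hx
  have huxx : uxx t x ≤ c * η'' x := by
    have hmax : IsLocalMax (fun y => u t y - c * η y) x := by
      filter_upwards [hnhds] with y hy
      linarith [hspace y hy]
    have hd : ∀ᶠ y in 𝓝 x, HasDerivAt (fun y => u t y - c * η y) (ux t y - c * η' y) y := by
      filter_upwards [hnhds] with y hy
      exact ((hu.hasDerivWithinAt_space t ht y (Ioo_subset_Icc_self hy)).hasDerivAt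
        (Icc_mem_nhds hy.1 hy.2)).sub ((hη.hasDerivAt y hy).const_mul c)
    have hd₂ := ((hu.hasDerivWithinAt_space₂ t ht x hxI).hasDerivAt
      (Icc_mem_nhds hx.1 hx.2)).sub ((hη.hasDerivAt_deriv x hx).const_mul c)
    linarith [hmax.hasDerivAt_deriv_nonpos hd hd₂]
  have hut : 0 ≤ ut t x :=
    htime.hasDerivWithinAt_nonneg_of_mem_Ioc ht (hu.hasDerivWithinAt_time t ht x hxI)
  have ha_uxx := mul_le_mul_of_nonneg_left huxx (ha t ht x hx)
  have hsuper := mul_nonpos_of_nonneg_of_nonpos hc (hη.supersolution t ht x hx)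
  have heq := hu.eq t ht x hxI
  rw [htouch] at heq
  linarith

theorem le_mul_weight (hu : IsClassicalSolution T a b f u ut ux uxx)
    (hη : IsSupersolutionWeight T σ a b η η' η'')
    (ha : ∀ t ∈ Ioc 0 T, ∀ x ∈ Ioo (0:ℝ) 1, 0 ≤ a t x) (hσ : 0 < σ) {L : ℝ} (hL : 0 ≤ L)
    (hinit : ∀ x ∈ Icc (0:ℝ) 1, u 0 x ≤ L * η x)
    (hleft : ∀ t ∈ Ioc 0 T, u t 0 ≤ L * η 0) (hright : ∀ t ∈ Ioc 0 T, u t 1 ≤ L * η 1)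
    (hf : ∀ t ∈ Ioc 0 T, ∀ x ∈ Ioo (0:ℝ) 1, f t x ≤ σ * (L * η x)) :
    ∀ t ∈ Icc 0 T, ∀ x ∈ Icc (0:ℝ) 1, u t x ≤ L * η x := by
  by_contra! ⟨t₀, ht₀, x₀, hx₀, hlt⟩
  have hcont : ContinuousOn (fun p : ℝ × ℝ => u p.1 p.2 / η p.2) (Icc 0 T ×ˢ Icc 0 1) :=
    hu.continuousOn.div (hη.continuousOn.comp continuous_snd.continuousOn fun p hp => hp.2)
      fun p hp => (hη.pos _ hp.2).ne'
  obtain ⟨⟨t, x⟩, hp, hmax⟩ := (isCompact_Icc.prod isCompact_Icc).exists_isMaxOn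
    ⟨(t₀, x₀), ht₀, hx₀⟩ hcont
  obtain ⟨htI, hxI⟩ : t ∈ Icc 0 T ∧ x ∈ Icc (0:ℝ) 1 := hp
  obtain ⟨c, hc⟩ : ∃ c, c = u t x / η x := ⟨_, rfl⟩
  have hle : ∀ s ∈ Icc 0 T, ∀ y ∈ Icc (0:ℝ) 1, u s y ≤ c * η y := fun s hs y hy =>
    hc ▸ (div_le_iff₀ (hη.pos y hy)).1 (hmax (mk_mem_prod hs hy))
  have hLc : L < c :=
    hc ▸ ((lt_div_iff₀ (hη.pos x₀ hx₀)).2 hlt).trans_le (hmax (mk_mem_prod ht₀ hx₀))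
  have hηx := hη.pos x hxI
  have htouch : u t x = c * η x := by rw [hc, div_mul_cancel₀ _ hηx.ne']
  have hc_le_of_le (h : c * η x ≤ L * η x) : False := hLc.not_ge (le_of_mul_le_mul_right h hηx)
  have ht : t ∈ Ioc 0 T := by
    refine ⟨htI.1.lt_of_ne fun h => hc_le_of_le ?_, htI.2⟩
    rw [← htouch, ← h]
    exact hinit x hxI
  have hx : x ∈ Ioo (0:ℝ) 1 := by
    refine ⟨hxI.1.lt_of_ne fun h => hc_le_of_le ?_, hxI.2.lt_of_ne fun h => hc_le_of_le ?_⟩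
    · rw [← htouch, ← h]; exact hleft t ht
    · rw [← htouch, h]; exact hright t ht
  have hforce := hu.le_forcing_of_touch hη ha ht hx (hL.trans hLc.le)
    (fun y hy => hle t htI y (Ioo_subset_Icc_self hy)) htouch
    (fun s hs => (hle s (Ioc_subset_Icc_self hs) x hxI).trans_eq htouch.symm)
  exact hc_le_of_le (le_of_mul_le_mul_left ((hforce.trans (hf t ht x hx))) hσ)

theorem abs_le_mul_weight (hu : IsClassicalSolution T a b f u ut ux uxx)
    (hη : IsSupersolutionWeight T σ a b η η' η'')
    (ha : ∀ t ∈ Ioc 0 T, ∀ x ∈ Ioo (0:ℝ) 1, 0 ≤ a t x) (hσ : 0 < σ) {L : ℝ} (hL : 0 ≤ L)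
    (hinit : ∀ x ∈ Icc (0:ℝ) 1, |u 0 x| ≤ L * η x)
    (hleft : ∀ t ∈ Ioc 0 T, |u t 0| ≤ L * η 0) (hright : ∀ t ∈ Ioc 0 T, |u t 1| ≤ L * η 1)
    (hf : ∀ t ∈ Ioc 0 T, ∀ x ∈ Ioo (0:ℝ) 1, |f t x| ≤ σ * (L * η x)) :
    ∀ t ∈ Icc 0 T, ∀ x ∈ Icc (0:ℝ) 1, |u t x| ≤ L * η x := by
  have hup := hu.le_mul_weight hη ha hσ hL (fun x hx => (le_abs_self _).trans (hinit x hx))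
    (fun t ht => (le_abs_self _).trans (hleft t ht))
    (fun t ht => (le_abs_self _).trans (hright t ht))
    (fun t ht x hx => (le_abs_self _).trans (hf t ht x hx))
  have hdown := hu.neg.le_mul_weight hη ha hσ hL (fun x hx => (neg_le_abs _).trans (hinit x hx))
    (fun t ht => (neg_le_abs _).trans (hleft t ht))
    (fun t ht => (neg_le_abs _).trans (hright t ht))
    (fun t ht x hx => (neg_le_abs _).trans (hf t ht x hx))
  exact fun t ht x hx => abs_le.2 ⟨by linarith [hdown t ht x hx], hup t ht x hx⟩

theorem weightedSup_le_max {ζ : ℝ} {d₀ d₁ : ℝ → ℝ} (hu : IsClassicalSolution T a b f u ut ux uxx)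
    (hη : IsSupersolutionWeight T σ a b η η' η'')
    (ha : ∀ t ∈ Ioc 0 T, ∀ x ∈ Ioo (0:ℝ) 1, 0 ≤ a t x)
    (hd₀ : ContinuousOn d₀ (Icc 0 T)) (hd₁ : ContinuousOn d₁ (Icc 0 T))
    (hf : ContinuousOn (fun p : ℝ × ℝ => f p.1 p.2) (Icc 0 T ×ˢ Icc 0 1))
    (hbc : ∀ t ∈ Ioc 0 T, u t 0 = d₀ t ∧ u t 1 = d₁ t) (hζ : 0 ≤ ζ) (hζσ : ζ < σ) (hT : 0 < T) :
    weightedSup η (u T) (Icc 0 1) ≤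
      max (exp (-ζ * T) * weightedSup η (u 0) (Icc 0 1))
        (sSup ((fun s => inputSize η (σ - ζ) d₀ d₁ f s * exp (-ζ * (T - s))) '' Ioc 0 T)) := by
  set M := max (exp (-ζ * T) * weightedSup η (u 0) (Icc 0 1))
    (sSup ((fun s => inputSize η (σ - ζ) d₀ d₁ f s * exp (-ζ * (T - s))) '' Ioc 0 T))
  have hσζ : 0 < σ - ζ := sub_pos.2 hζσ
  have hη₀ := hη.pos 0 (left_mem_Icc.2 zero_le_one)
  have hη₁ := hη.pos 1 (right_mem_Icc.2 zero_le_one)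
  obtain ⟨C, hC⟩ := exists_forall_inputSize_le hd₀ hd₁ hf hη.pos hη.continuousOn hσζ.le
  obtain ⟨Cf, hCf⟩ := exists_forall_abs_div_le hf hη.pos hη.continuousOn
  have hinput (s : ℝ) (hs : s ∈ Ioc 0 T) :
      exp (ζ * s) * inputSize η (σ - ζ) d₀ d₁ f s ≤ M * exp (ζ * T) :=
    exp_mul_le_of_mul_exp_le <| (le_max_right _ _).trans' <| le_csSup
      (bddAbove_mul_exp_image hζ fun s hs => ⟨inputSize_nonneg hη₀, hC s (Ioc_subset_Icc_self hs)⟩)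
      (mem_image_of_mem _ hs)
  have hV₀ : weightedSup η (u 0) (Icc 0 1) ≤ M * exp (ζ * T) := by
    simpa using exp_mul_le_of_mul_exp_le (s := 0) (t := T) (ζ := ζ)
      (B := weightedSup η (u 0) (Icc 0 1)) (by rw [sub_zero, mul_comm]; exact le_max_left _ _)
  have hscale (s : ℝ) (hs : s ∈ Ioc 0 T) {B y : ℝ} (hy : 0 ≤ y)
      (hB : B ≤ inputSize η (σ - ζ) d₀ d₁ f s * y) : exp (ζ * s) * B ≤ M * exp (ζ * T) * y :=
    calc exp (ζ * s) * B ≤ exp (ζ * s) * (inputSize η (σ - ζ) d₀ d₁ f s * y) :=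
          mul_le_mul_of_nonneg_left hB (exp_pos _).le
      _ = exp (ζ * s) * inputSize η (σ - ζ) d₀ d₁ f s * y := by ring
      _ ≤ M * exp (ζ * T) * y := mul_le_mul_of_nonneg_right (hinput s hs) hy
  have hL : 0 ≤ M * exp (ζ * T) :=
    (mul_nonneg (exp_pos _).le (inputSize_nonneg hη₀)).trans (hinput T ⟨hT, le_rfl⟩)
  have hw := (hu.exp_mul ζ).abs_le_mul_weight (hη.add_coeff ζ) ha hσζ hL ?_ ?_ ?_ ?_
    T (right_mem_Icc.2 hT.le)
  · refine weightedSup_le ⟨0, left_mem_Icc.2 zero_le_one⟩ hη.pos fun x hx => ?_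
    have := hw x hx
    rw [abs_mul, abs_of_pos (exp_pos _)] at this
    nlinarith [exp_pos (ζ * T), hη.pos x hx]
  · intro x hx
    have hbdd : BddAbove ((fun x => |u 0 x| / η x) '' Icc 0 1) :=
      isCompact_Icc.bddAbove_image <| ((hu.continuousOn.comp (continuous_const.prodMk
        continuous_id).continuousOn fun x hx => mk_mem_prod (left_mem_Icc.2 hT.le) hx).abs.div
        hη.continuousOn fun x hx => (hη.pos x hx).ne')
    simpa using (abs_le_weightedSup_mul hbdd hx (hη.pos x hx)).trans
      (mul_le_mul_of_nonneg_right hV₀ (hη.pos x hx).le)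
  · intro s hs
    rw [abs_mul, abs_of_pos (exp_pos _), (hbc s hs).1]
    exact hscale s hs hη₀.le (abs_left_le_inputSize_mul hη₀)
  · intro s hs
    rw [abs_mul, abs_of_pos (exp_pos _), (hbc s hs).2]
    exact hscale s hs hη₁.le (abs_right_le_inputSize_mul hη₁)
  · intro s hs x hx
    have hbdd : BddAbove ((fun x => |f s x| / η x) '' Ioo 0 1) :=
      ⟨Cf, forall_mem_image.2 fun x hx => hCf s (Ioc_subset_Icc_self hs) x (Ioo_subset_Icc_self hx)⟩
    have hηx := hη.pos x (Ioo_subset_Icc_self hx)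
    rw [abs_mul, abs_of_pos (exp_pos _)]
    exact (hscale s hs (mul_pos hσζ hηx).le ((abs_forcing_le_inputSize_mul hσζ hbdd hx hηx).trans_eq
      (by ring))).trans_eq (by ring)

end IsClassicalSolution

theorem example3_1_general
    (σ : ℝ)
    (κ r : ℝ → ℝ)
    (hκ_pos : ∀ v : ℝ, 0 < κ v)
    (hsup : ∃ K : ℝ, K < Real.pi ^ 2 ∧ ∀ v : ℝ, (σ + r v) / κ v ≤ K) :
    ∃ θ ∈ Set.Ioo 0 Real.pi, ∃ φ > (0:ℝ), θ + φ < Real.pi ∧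
      ∀ T > (0:ℝ), ∀ d₀ d₁ : ℝ → ℝ, ∀ f u ut ux uxx : ℝ → ℝ → ℝ,
        ContinuousOn d₀ (Set.Icc 0 T) → ContinuousOn d₁ (Set.Icc 0 T) →
        ContinuousOn (fun p : ℝ × ℝ => f p.1 p.2) (Set.Icc 0 T ×ˢ Set.Icc 0 1) →
        ContinuousOn (fun p : ℝ × ℝ => u p.1 p.2) (Set.Icc 0 T ×ˢ Set.Icc 0 1) →
        (∀ t ∈ Set.Ioc (0:ℝ) T, ∀ x ∈ Set.Icc (0:ℝ) 1,
          HasDerivWithinAt (fun τ => u τ x) (ut t x) (Set.Ioc 0 T) t) →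
        ContinuousOn (fun p : ℝ × ℝ => ut p.1 p.2) (Set.Ioc 0 T ×ˢ Set.Icc 0 1) →
        (∀ t ∈ Set.Ioc (0:ℝ) T, ∀ x ∈ Set.Icc (0:ℝ) 1,
          HasDerivWithinAt (u t) (ux t x) (Set.Icc 0 1) x) →
        (∀ t ∈ Set.Ioc (0:ℝ) T, ∀ x ∈ Set.Icc (0:ℝ) 1,
          HasDerivWithinAt (ux t) (uxx t x) (Set.Icc 0 1) x) →
        (∀ t ∈ Set.Ioc (0:ℝ) T, ContinuousOn (uxx t) (Set.Icc 0 1)) →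
        (∀ t ∈ Set.Ioc (0:ℝ) T, ∀ x ∈ Set.Icc (0:ℝ) 1,
          ut t x = κ (u t x) * uxx t x + r (u t x) * u t x + f t x) →
        (∀ t ∈ Set.Icc (0:ℝ) T, u t 0 = d₀ t ∧ u t 1 = d₁ t) →
        ∀ ζ ∈ Set.Ico (0:ℝ) σ, ∀ t ∈ Set.Ioc (0:ℝ) T,
          sSup ((fun x => |u t x| / Real.sin (θ * x + φ)) '' Set.Icc 0 1) ≤
            max (Real.exp (-ζ * t) *
                  sSup ((fun x => |u 0 x| / Real.sin (θ * x + φ)) '' Set.Icc 0 1))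
              (sSup ((fun s =>
                  max (max (|d₀ s| / Real.sin (θ * 0 + φ)) (|d₁ s| / Real.sin (θ * 1 + φ)))
                    (sSup ((fun x => |f s x| / Real.sin (θ * x + φ)) '' Set.Ioo 0 1) /
                      (σ - ζ)) *
                  Real.exp (-ζ * (t - s))) '' Set.Ioc 0 t)) := by
  obtain ⟨K, hKπ, hK⟩ := hsup
  obtain ⟨θ, hθ, hKθ⟩ := exists_mem_Ioo_pi_le_sq hKπ
  have hrκ (v : ℝ) : σ + r v ≤ θ ^ 2 * κ v := (div_le_iff₀ (hκ_pos v)).1 ((hK v).trans hKθ)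
  refine ⟨θ, hθ, (π - θ) / 2, by linarith [hθ.2], by linarith [hθ.2], ?_⟩
  intro T _ d₀ d₁ f u ut ux uxx hd₀ hd₁ hf hu hut _ hux huxx _ hpde hbc ζ hζ t ht
  have hsol : IsClassicalSolution T (fun s x => κ (u s x)) (fun s x => r (u s x)) f u ut ux uxx :=
    ⟨hu, hut, hux, huxx, hpde⟩
  have hη := isSupersolutionWeight_sin (T := t) (φ := (π - θ) / 2) (a := fun s x => κ (u s x))
    (b := fun s x => r (u s x)) hθ.1.le (by linarith [hθ.2]) (by linarith [hθ.2])
    fun s _ x _ => hrκ (u s x)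
  exact (hsol.mono ht.2).weightedSup_le_max hη (fun s _ x _ => (hκ_pos _).le)
    (hd₀.mono (Icc_subset_Icc_right ht.2)) (hd₁.mono (Icc_subset_Icc_right ht.2))
    (hf.mono (prod_mono (Icc_subset_Icc_right ht.2) subset_rfl))
    (fun s hs => hbc s (Ioc_subset_Icc_self (Ioc_subset_Ioc_right ht.2 hs))) hζ.1 hζ.2 ht.1

/-- **Example 3.1** (Karafyllis–Krstic): nonlinear reaction–diffusion PDE
`u_t = κ(u)u_xx + r(u)u + f` with Dirichlet boundary inputs. If `κ > 0` and
`sup{(σ + r(v))/κ(v) : v ∈ ℝ} < π²`, then there exist `θ ∈ (0,π)` and `φ > 0` with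
`θ + φ < π` such that, with weight `η(x) = sin(θx + φ)`, every classical solution
satisfies the fading memory ISS estimate in the weighted sup norm. -/
theorem example3_1
    (σ : ℝ) (hσ : 0 < σ)
    (κ r : ℝ → ℝ) (hκ_cont : Continuous κ) (hr_cont : Continuous r)
    (hκ_pos : ∀ v : ℝ, 0 < κ v)
    (hsup : ∃ K : ℝ, K < Real.pi ^ 2 ∧ ∀ v : ℝ, (σ + r v) / κ v ≤ K) :
    ∃ θ ∈ Set.Ioo 0 Real.pi, ∃ φ > (0:ℝ), θ + φ < Real.pi ∧
      ∀ T > (0:ℝ), ∀ d₀ d₁ : ℝ → ℝ, ∀ f u ut ux uxx : ℝ → ℝ → ℝ,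
        ContinuousOn d₀ (Set.Icc 0 T) → ContinuousOn d₁ (Set.Icc 0 T) →
        ContinuousOn (fun p : ℝ × ℝ => f p.1 p.2) (Set.Icc 0 T ×ˢ Set.Icc 0 1) →
        ContinuousOn (fun p : ℝ × ℝ => u p.1 p.2) (Set.Icc 0 T ×ˢ Set.Icc 0 1) →
        (∀ t ∈ Set.Ioc (0:ℝ) T, ∀ x ∈ Set.Icc (0:ℝ) 1,
          HasDerivWithinAt (fun τ => u τ x) (ut t x) (Set.Ioc 0 T) t) →
        ContinuousOn (fun p : ℝ × ℝ => ut p.1 p.2) (Set.Ioc 0 T ×ˢ Set.Icc 0 1) →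
        (∀ t ∈ Set.Ioc (0:ℝ) T, ∀ x ∈ Set.Icc (0:ℝ) 1,
          HasDerivWithinAt (u t) (ux t x) (Set.Icc 0 1) x) →
        (∀ t ∈ Set.Ioc (0:ℝ) T, ∀ x ∈ Set.Icc (0:ℝ) 1,
          HasDerivWithinAt (ux t) (uxx t x) (Set.Icc 0 1) x) →
        (∀ t ∈ Set.Ioc (0:ℝ) T, ContinuousOn (uxx t) (Set.Icc 0 1)) →
        (∀ t ∈ Set.Ioc (0:ℝ) T, ∀ x ∈ Set.Icc (0:ℝ) 1,
          ut t x = κ (u t x) * uxx t x + r (u t x) * u t x + f t x) →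
        (∀ t ∈ Set.Icc (0:ℝ) T, u t 0 = d₀ t ∧ u t 1 = d₁ t) →
        ∀ ζ ∈ Set.Ico (0:ℝ) σ, ∀ t ∈ Set.Ioc (0:ℝ) T,
          sSup ((fun x => |u t x| / Real.sin (θ * x + φ)) '' Set.Icc 0 1) ≤
            max (Real.exp (-ζ * t) *
                  sSup ((fun x => |u 0 x| / Real.sin (θ * x + φ)) '' Set.Icc 0 1))
              (sSup ((fun s =>
                  max (max (|d₀ s| / Real.sin (θ * 0 + φ)) (|d₁ s| / Real.sin (θ * 1 + φ)))
                    (sSup ((fun x => |f s x| / Real.sin (θ * x + φ)) '' Set.Ioo 0 1) /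
                      (σ - ζ)) *
                  Real.exp (-ζ * (t - s))) '' Set.Ioc 0 t)) :=
  example3_1_general σ κ r hκ_pos hsup
end

section
/- Consider the non-local 1-D parabolic PDE ∂u/∂t(t,x) = κ(u[t])·∂²u/∂x²(t,x) + f(t,x) on (0,T] × [0,1] with boundary conditions ∂u/∂x(t,0) = (λ₀ + β₀(u[t]))·u(t,0) + d₀(t) and ∂u/∂x(t,1) = −(λ₁ + β₁(u[t]))·u(t,1) + d₁(t), where d₀, d₁ ∈ C⁰([0,T]), f ∈ C⁰([0,T] × [0,1]), κ is a functional on state profiles with κ(v) ≥ κ* > 0 for all profiles v, β₀, β₁ are non-negative functionals on C⁰([0,1]), and λ₀, λ₁ > 0 are constants. Let θ ∈ (0, π/2) satisfy θ·tan(θ) < λ₁ and set η(x) := cos(θx). Then every classical solution u ∈ C⁰([0,T] × [0,1]) ∩ C¹((0,T] × [0,1]) with u[t] ∈ C²([0,1]) for t ∈ (0,T] satisfies, for all ζ ∈ [0, κ*θ²) and t ∈ (0,T]: ‖u[t]‖_{∞,η} ≤ max( exp(−ζt)·‖u[0]‖_{∞,η}, sup_{0<s≤t} max( |d₀(s)|/λ₀,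 |d₁(s)|/(λ₁·cos(θ) − θ·sin(θ)), ‖f[s]‖_{∞,η}/(κ*θ² − ζ) )·exp(−ζ(t−s)) ). -/
/-!
For `σ = ±1` the function `σu` is a sub-solution of a linear problem: `σu_t ≤ k(t) σu_xx + |f|`
with `k ≥ κ*`, and wherever `σu > 0` the boundary conditions give `λ₀ σu ≤ σu_x + |d₀|` at `x = 0`
and `σu_x ≤ -λ₁ σu + |d₁|` at `x = 1`. For such a sub-solution maximise
`e^{ζs} u(s,x) / cos(θx)` over `[0,t] × [0,1]`. At a positive maximum with `s > 0` we get
`u_t + ζu ≥ 0`, and `u(s,·)` is touched from above by `c cos(θ·)`. This forces `u_x ≤ 0` at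
`x = 0`, `u_x cos θ + θ sin θ u ≥ 0` at `x = 1` and `u_xx ≤ -θ²u` inside. Combined with the
boundary conditions, resp. the equation, each case bounds `u(s,x) / cos(θx)` by the fading-memory
term at time `s`: this is where `λ₁ cos θ - θ sin θ > 0` and `κ*θ² - ζ > 0` enter. At `s = 0`
the initial data bound the maximum.
-/

open Set Filter

open Real Topology

lemma IsMaxOn.mul_nonpos_of_hasDerivWithinAt {g : ℝ → ℝ} {s : Set ℝ} {a b D : ℝ}
    (hmax : IsMaxOn g s a) (hg : HasDerivWithinAt g D s a) (hseg : segment ℝ a b ⊆ s) :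
    (b - a) * D ≤ 0 := by
  simpa using hmax.localize.hasFDerivWithinAt_nonpos hg.hasFDerivWithinAt
    (sub_mem_posTangentConeAt_of_segment_subset hseg)

lemma IsLocalMax.second_deriv_nonpos {g g' : ℝ → ℝ} {a c : ℝ} (hmax : IsLocalMax g a)
    (hg : ∀ᶠ x in 𝓝 a, HasDerivAt g (g' x) x) (hg' : HasDerivAt g' c a) : c ≤ 0 := by
  -- for `c > 0`, `a` would also be a local minimum, making `g` locally constant and `c = 0`
  by_contra! hc
  have hderiv : deriv g =ᶠ[𝓝 a] g' := hg.mono fun x hx => hx.deriv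
  have hc' : deriv (deriv g) a = c := (hg'.congr_of_eventuallyEq hderiv).deriv
  have hmin : IsLocalMin g a :=
    isLocalMin_of_deriv_deriv_pos (hc' ▸ hc)
      (hderiv.eq_of_nhds.trans (hmax.hasDerivAt_eq_zero hg.self_of_nhds))
      hg.self_of_nhds.continuousAt
  have hconst : g =ᶠ[𝓝 a] fun _ => g a :=
    (hmax.and hmin).mono fun x hx => le_antisymm hx.1 hx.2
  have : deriv (deriv g) a = 0 := by
    rw [hconst.deriv.deriv_eq]
    simp
  linarith

section CosineWeight

variable {θ : ℝ}

lemma cos_pos_of_mem_Ioo_zero_pi_div_two (hθ : θ ∈ Ioo 0 (π / 2)) : 0 < cos θ :=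
  cos_pos_of_mem_Ioo ⟨by linarith [hθ.1, pi_pos], hθ.2⟩

lemma cos_mul_pos (hθ : θ ∈ Ioo 0 (π / 2)) {x : ℝ} (hx : x ∈ Icc (0 : ℝ) 1) :
    0 < cos (θ * x) :=
  cos_pos_of_mem_Ioo ⟨by nlinarith [pi_pos, hθ.1, hx.1], by nlinarith [hθ.1, hθ.2, hx.2]⟩

lemma cos_le_cos_mul (hθ : θ ∈ Ioo 0 (π / 2)) {x : ℝ} (hx : x ∈ Icc (0 : ℝ) 1) :
    cos θ ≤ cos (θ * x) :=
  cos_le_cos_of_nonneg_of_le_pi (by nlinarith [hθ.1, hx.1]) (by linarith [hθ.2, pi_pos])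
    (by nlinarith [hθ.1, hx.2])

lemma mul_cos_sub_mul_sin_pos (hθ : θ ∈ Ioo 0 (π / 2)) {lam : ℝ} (hlam : θ * tan θ < lam) :
    0 < lam * cos θ - θ * sin θ := by
  rw [tan_eq_sin_div_cos, ← mul_div_assoc,
    div_lt_iff₀ (cos_pos_of_mem_Ioo_zero_pi_div_two hθ)] at hlam
  linarith

lemma hasDerivAt_cos_mul (θ x : ℝ) :
    HasDerivAt (fun y => cos (θ * y)) (-(θ * sin (θ * x))) x :=
  (((hasDerivAt_id' x).const_mul θ).cos).congr_deriv (by ring)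

lemma hasDerivAt_mul_sin_mul (θ x : ℝ) :
    HasDerivAt (fun y => θ * sin (θ * y)) (θ ^ 2 * cos (θ * x)) x :=
  ((((hasDerivAt_id' x).const_mul θ).sin).const_mul θ).congr_deriv (by ring)

lemma abs_div_cos_mul_le {a C x : ℝ} (hθ : θ ∈ Ioo 0 (π / 2)) (hx : x ∈ Icc (0 : ℝ) 1)
    (ha : |a| ≤ C) : |a| / cos (θ * x) ≤ C / cos θ :=
  div_le_div₀ ((abs_nonneg _).trans ha) ha (cos_pos_of_mem_Ioo_zero_pi_div_two hθ)
    (cos_le_cos_mul hθ hx)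

noncomputable def weightedSupNorm (θ : ℝ) (g : ℝ → ℝ) (s : Set ℝ) : ℝ :=
  sSup ((fun x => |g x| / cos (θ * x)) '' s)

variable {g : ℝ → ℝ} {s : Set ℝ}

lemma bddAbove_abs_div_cos_mul (hθ : θ ∈ Ioo 0 (π / 2)) (hg : ContinuousOn g (Icc 0 1))
    (hs : s ⊆ Icc 0 1) : BddAbove ((fun x => |g x| / cos (θ * x)) '' s) :=
  (isCompact_Icc.bddAbove_image
    (hg.abs.div (by fun_prop) fun x hx => (cos_mul_pos hθ hx).ne')).mono (image_mono hs)

lemma abs_le_weightedSupNorm_mul_cos (hθ : θ ∈ Ioo 0 (π / 2)) (hg : ContinuousOn g (Icc 0 1))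
    (hs : s ⊆ Icc 0 1) {x : ℝ} (hx : x ∈ s) : |g x| ≤ weightedSupNorm θ g s * cos (θ * x) :=
  (div_le_iff₀ (cos_mul_pos hθ (hs hx))).1
    (le_csSup (bddAbove_abs_div_cos_mul hθ hg hs) ⟨x, hx, rfl⟩)

lemma weightedSupNorm_nonneg (hθ : θ ∈ Ioo 0 (π / 2)) (hs : s ⊆ Icc 0 1) :
    0 ≤ weightedSupNorm θ g s :=
  Real.sSup_nonneg <| by
    rintro _ ⟨x, hx, rfl⟩
    exact div_nonneg (abs_nonneg _) (cos_mul_pos hθ (hs hx)).le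

lemma weightedSupNorm_le {K : ℝ} (hθ : θ ∈ Ioo 0 (π / 2)) (hs : s ⊆ Icc 0 1) (hne : s.Nonempty)
    (hK : ∀ x ∈ s, |g x| ≤ K * cos (θ * x)) : weightedSupNorm θ g s ≤ K :=
  csSup_le (hne.image _) <| by
    rintro _ ⟨x, hx, rfl⟩
    exact (div_le_iff₀ (cos_mul_pos hθ (hs hx))).2 (hK x hx)

lemma weightedSupNorm_le_div_cos {C : ℝ} (hθ : θ ∈ Ioo 0 (π / 2)) (hs : s ⊆ Icc 0 1)
    (hne : s.Nonempty) (hC : ∀ x ∈ s, |g x| ≤ C) : weightedSupNorm θ g s ≤ C / cos θ :=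
  csSup_le (hne.image _) <| by
    rintro _ ⟨x, hx, rfl⟩
    exact abs_div_cos_mul_le hθ (hs hx) (hC x hx)

end CosineWeight

section TouchingFromAbove

variable {θ c : ℝ} {v v' : ℝ → ℝ}

lemma hasDerivWithinAt_sub_mul_cos_mul {s : Set ℝ} {x D : ℝ} (hv : HasDerivWithinAt v D s x) :
    HasDerivWithinAt (fun y => v y - c * cos (θ * y)) (D + c * (θ * sin (θ * x))) s x :=
  (hv.sub ((hasDerivAt_cos_mul θ x).hasDerivWithinAt.const_mul c)).congr_deriv (by ring)

lemma deriv_nonpos_of_isMaxOn_sub_mul_cos_mul_zero {D : ℝ}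
    (hmax : IsMaxOn (fun y => v y - c * cos (θ * y)) (Icc 0 1) 0)
    (hv : HasDerivWithinAt v D (Icc 0 1) 0) : D ≤ 0 := by
  simpa using hmax.mul_nonpos_of_hasDerivWithinAt (hasDerivWithinAt_sub_mul_cos_mul hv)
    (segment_eq_Icc zero_le_one).subset

lemma deriv_add_nonneg_of_isMaxOn_sub_mul_cos_mul_one {D : ℝ}
    (hmax : IsMaxOn (fun y => v y - c * cos (θ * y)) (Icc 0 1) 1)
    (hv : HasDerivWithinAt v D (Icc 0 1) 1) : 0 ≤ D + c * (θ * sin θ) := by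
  have h := hmax.mul_nonpos_of_hasDerivWithinAt (hasDerivWithinAt_sub_mul_cos_mul hv)
    ((segment_symm ℝ 1 0).trans (segment_eq_Icc zero_le_one)).subset
  simp only [mul_one] at h
  linarith

lemma deriv2_add_nonpos_of_isMaxOn_sub_mul_cos_mul {a D : ℝ} (ha : a ∈ Ioo (0 : ℝ) 1)
    (hmax : IsMaxOn (fun y => v y - c * cos (θ * y)) (Icc 0 1) a)
    (hv : ∀ x ∈ Icc (0 : ℝ) 1, HasDerivWithinAt v (v' x) (Icc 0 1) x)
    (hv' : HasDerivWithinAt v' D (Icc 0 1) a) : D + c * (θ ^ 2 * cos (θ * a)) ≤ 0 := by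
  refine (hmax.isLocalMax (Icc_mem_nhds ha.1 ha.2)).second_deriv_nonpos
    (g' := fun x => v' x + c * (θ * sin (θ * x))) ?_ ?_
  · filter_upwards [Ioo_mem_nhds ha.1 ha.2] with x hx
    exact (hasDerivWithinAt_sub_mul_cos_mul (hv x (Ioo_subset_Icc_self hx))).hasDerivAt
      (Icc_mem_nhds hx.1 hx.2)
  · exact (hv'.hasDerivAt (Icc_mem_nhds ha.1 ha.2)).add
      ((hasDerivAt_mul_sin_mul θ a).const_mul c)

end TouchingFromAbove

lemma add_mul_nonneg_of_isMaxOn_exp_mul {φ : ℝ → ℝ} {ζ s D : ℝ} (hs : 0 < s)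
    (hmax : IsMaxOn (fun τ => exp (ζ * τ) * φ τ) (Ioc 0 s) s)
    (hφ : HasDerivWithinAt φ D (Ioc 0 s) s) : 0 ≤ D + ζ * φ s := by
  have hderiv : HasDerivWithinAt (fun τ => exp (ζ * τ) * φ τ)
      (exp (ζ * s) * (D + ζ * φ s)) (Ioc 0 s) s :=
    ((((hasDerivAt_id' s).const_mul ζ).exp.hasDerivWithinAt).mul hφ).congr_deriv (by ring)
  have hseg : segment ℝ s (s / 2) ⊆ Ioc 0 s := by
    rw [segment_symm, segment_eq_Icc (by linarith)]
    exact Icc_subset_Ioc_iff (by linarith) |>.2 ⟨by linarith, le_rfl⟩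
  have h := hmax.mul_nonpos_of_hasDerivWithinAt hderiv hseg
  exact (mul_nonneg_iff_of_pos_left (exp_pos _)).1
    (nonneg_of_mul_nonpos_right h (by linarith))

lemma exp_mul_le_exp_mul_iff {ζ s t m K : ℝ} :
    exp (ζ * s) * m ≤ exp (ζ * t) * K ↔ m * exp (-ζ * (t - s)) ≤ K := by
  rw [show -ζ * (t - s) = ζ * s - ζ * t by ring, exp_sub, ← le_div_iff₀' (exp_pos _)]
  field_simp

lemma mul_le_abs_of_abs_eq_one {σ : ℝ} (hσ : |σ| = 1) (a : ℝ) : σ * a ≤ |a| := by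
  simpa [abs_mul, hσ] using le_abs_self (σ * a)

/-- The boundary inequalities are only required where `u > 0`: there the nonlinear terms
`β₀(u) u`, `β₁(u) u` of the original problem have a sign and can be dropped. -/
structure IsSubsolution (T lam₀ lam₁ : ℝ) (k D₀ D₁ : ℝ → ℝ) (F u ut ux uxx : ℝ → ℝ → ℝ) :
    Prop where
  continuousOn : ContinuousOn (fun p : ℝ × ℝ => u p.1 p.2) (Icc 0 T ×ˢ Icc 0 1)
  hasDerivWithinAt_t : ∀ t ∈ Ioc (0 : ℝ) T, ∀ x ∈ Icc (0 : ℝ) 1,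
    HasDerivWithinAt (fun τ => u τ x) (ut t x) (Ioc 0 T) t
  hasDerivWithinAt_x : ∀ t ∈ Ioc (0 : ℝ) T, ∀ x ∈ Icc (0 : ℝ) 1,
    HasDerivWithinAt (u t) (ux t x) (Icc 0 1) x
  hasDerivWithinAt_xx : ∀ t ∈ Ioc (0 : ℝ) T, ∀ x ∈ Icc (0 : ℝ) 1,
    HasDerivWithinAt (ux t) (uxx t x) (Icc 0 1) x
  pde : ∀ t ∈ Ioc (0 : ℝ) T, ∀ x ∈ Ioo (0 : ℝ) 1, ut t x ≤ k t * uxx t x + F t x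
  bc₀ : ∀ t ∈ Ioc (0 : ℝ) T, 0 < u t 0 → lam₀ * u t 0 ≤ ux t 0 + D₀ t
  bc₁ : ∀ t ∈ Ioc (0 : ℝ) T, 0 < u t 1 → ux t 1 ≤ -(lam₁ * u t 1) + D₁ t

lemma IsSubsolution.of_solution {T lam₀ lam₁ σ : ℝ} {κ β₀ β₁ : (ℝ → ℝ) → ℝ} {d₀ d₁ : ℝ → ℝ}
    {f u ut ux uxx : ℝ → ℝ → ℝ} (hσ : |σ| = 1)
    (hβ₀ : ∀ v, 0 ≤ β₀ v) (hβ₁ : ∀ v, 0 ≤ β₁ v)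
    (hu_cont : ContinuousOn (fun p : ℝ × ℝ => u p.1 p.2) (Icc 0 T ×ˢ Icc 0 1))
    (hut : ∀ t ∈ Ioc (0 : ℝ) T, ∀ x ∈ Icc (0 : ℝ) 1,
      HasDerivWithinAt (fun τ => u τ x) (ut t x) (Ioc 0 T) t)
    (hux : ∀ t ∈ Ioc (0 : ℝ) T, ∀ x ∈ Icc (0 : ℝ) 1, HasDerivWithinAt (u t) (ux t x) (Icc 0 1) x)
    (huxx : ∀ t ∈ Ioc (0 : ℝ) T, ∀ x ∈ Icc (0 : ℝ) 1,
      HasDerivWithinAt (ux t) (uxx t x) (Icc 0 1) x)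
    (hpde : ∀ t ∈ Ioc (0 : ℝ) T, ∀ x ∈ Icc (0 : ℝ) 1, ut t x = κ (u t) * uxx t x + f t x)
    (hbc : ∀ t ∈ Ioc (0 : ℝ) T, ux t 0 = (lam₀ + β₀ (u t)) * u t 0 + d₀ t ∧
      ux t 1 = -(lam₁ + β₁ (u t)) * u t 1 + d₁ t) :
    IsSubsolution T lam₀ lam₁ (fun t => κ (u t)) (fun t => |d₀ t|) (fun t => |d₁ t|)
      (fun t x => |f t x|) (fun t x => σ * u t x) (fun t x => σ * ut t x)
      (fun t x => σ * ux t x) (fun t x => σ * uxx t x) where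
  continuousOn := continuousOn_const.mul hu_cont
  hasDerivWithinAt_t t ht x hx := (hut t ht x hx).const_mul σ
  hasDerivWithinAt_x t ht x hx := (hux t ht x hx).const_mul σ
  hasDerivWithinAt_xx t ht x hx := (huxx t ht x hx).const_mul σ
  pde t ht x hx := by
    rw [hpde t ht x (Ioo_subset_Icc_self hx)]
    linear_combination mul_le_abs_of_abs_eq_one hσ (f t x)
  bc₀ t ht hpos := by
    rw [(hbc t ht).1]
    linear_combination mul_nonneg (hβ₀ (u t)) hpos.le + mul_le_abs_of_abs_eq_one hσ (-d₀ t) +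
      abs_neg (d₀ t)
  bc₁ t ht hpos := by
    rw [(hbc t ht).2]
    linear_combination mul_nonneg (hβ₁ (u t)) hpos.le + mul_le_abs_of_abs_eq_one hσ (d₁ t)

noncomputable def expWeighted (ζ θ : ℝ) (u : ℝ → ℝ → ℝ) (p : ℝ × ℝ) : ℝ :=
  exp (ζ * p.1) * u p.1 p.2 / cos (θ * p.2)

section MaximumPrinciple

variable {T κstar ζ θ lam₀ lam₁ : ℝ} {k D₀ D₁ : ℝ → ℝ} {F u ut ux uxx : ℝ → ℝ → ℝ}

lemma le_mul_cos_of_isMaxOn_expWeighted {s x m : ℝ} (hs : s ∈ Ioc 0 T) (hx : x ∈ Icc (0 : ℝ) 1)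
    (hθ : θ ∈ Ioo 0 (π / 2)) (hζ : ζ < κstar * θ ^ 2) (hlam₀ : 0 < lam₀)
    (hc₁ : 0 < lam₁ * cos θ - θ * sin θ) (hκstar : 0 ≤ κstar) (hk : κstar ≤ k s)
    (hu : IsSubsolution T lam₀ lam₁ k D₀ D₁ F u ut ux uxx)
    (hm₀ : D₀ s ≤ lam₀ * m) (hm₁ : D₁ s ≤ (lam₁ * cos θ - θ * sin θ) * m)
    (hmF : ∀ x ∈ Ioo (0 : ℝ) 1, F s x ≤ (κstar * θ ^ 2 - ζ) * m * cos (θ * x))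
    (hpos : 0 < u s x) (hmax : IsMaxOn (expWeighted ζ θ u) (Icc 0 s ×ˢ Icc 0 1) (s, x)) :
    u s x ≤ m * cos (θ * x) := by
  have hη : 0 < cos (θ * x) := cos_mul_pos hθ hx
  set c := u s x / cos (θ * x)
  have hcx : c * cos (θ * x) = u s x := div_mul_cancel₀ _ hη.ne'
  have hprofile : IsMaxOn (fun y => u s y - c * cos (θ * y)) (Icc 0 1) x := by
    intro y hy
    have h := isMaxOn_iff.1 hmax (s, y) ⟨⟨hs.1.le, le_rfl⟩, hy⟩
    simp only [expWeighted, mul_div_assoc] at h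
    have hy' : u s y / cos (θ * y) ≤ c := le_of_mul_le_mul_left h (exp_pos _)
    rw [div_le_iff₀ (cos_mul_pos hθ hy)] at hy'
    show u s y - c * cos (θ * y) ≤ u s x - c * cos (θ * x)
    linarith
  have htime : 0 ≤ ut s x + ζ * u s x := by
    refine add_mul_nonneg_of_isMaxOn_exp_mul (φ := fun τ => u τ x) hs.1 (fun τ hτ => ?_)
      ((hu.hasDerivWithinAt_t s hs x hx).mono (Ioc_subset_Ioc_right hs.2))
    have h := isMaxOn_iff.1 hmax (τ, x) ⟨⟨hτ.1.le, hτ.2⟩, hx⟩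
    simp only [expWeighted] at h ⊢
    exact (div_le_div_iff_of_pos_right hη).1 h
  rcases hx.1.eq_or_lt with rfl | hx0
  · have hux := deriv_nonpos_of_isMaxOn_sub_mul_cos_mul_zero hprofile
      (hu.hasDerivWithinAt_x s hs 0 hx)
    have hbc := hu.bc₀ s hs hpos
    simp only [mul_zero, cos_zero, mul_one]
    nlinarith
  rcases hx.2.eq_or_lt with rfl | hx1
  · have hux := deriv_add_nonneg_of_isMaxOn_sub_mul_cos_mul_one hprofile
      (hu.hasDerivWithinAt_x s hs 1 hx)
    have hcos := cos_pos_of_mem_Ioo_zero_pi_div_two hθ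
    simp only [mul_one] at hcx hux ⊢
    have hflux : 0 ≤ (D₁ s - lam₁ * u s 1 + c * (θ * sin θ)) * cos θ :=
      mul_nonneg (by linarith [hu.bc₁ s hs hpos]) hcos.le
    have h : 0 ≤ (lam₁ * cos θ - θ * sin θ) * (m * cos θ - u s 1) := by
      linear_combination hflux + mul_le_mul_of_nonneg_right hm₁ hcos.le + θ * sin θ * hcx
    linarith [(mul_nonneg_iff_of_pos_left hc₁).1 h]
  · have huxx := deriv2_add_nonpos_of_isMaxOn_sub_mul_cos_mul ⟨hx0, hx1⟩ hprofile
      (hu.hasDerivWithinAt_x s hs) (hu.hasDerivWithinAt_xx s hs x hx)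
    have hconcave : uxx s x ≤ -(θ ^ 2 * u s x) := by rw [← hcx]; linarith
    have hsub : ut s x ≤ κstar * -(θ ^ 2 * u s x) + F s x :=
      calc ut s x ≤ k s * uxx s x + F s x := hu.pde s hs x ⟨hx0, hx1⟩
        _ ≤ k s * -(θ ^ 2 * u s x) + F s x := by gcongr; linarith
        _ ≤ κstar * -(θ ^ 2 * u s x) + F s x := by
          gcongr ?_ + _
          exact mul_le_mul_of_nonpos_right hk (by nlinarith [sq_nonneg θ])
    have h : (κstar * θ ^ 2 - ζ) * u s x ≤ (κstar * θ ^ 2 - ζ) * (m * cos (θ * x)) := by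
      nlinarith [hmF x ⟨hx0, hx1⟩]
    exact le_of_mul_le_mul_left h (by linarith)

lemma le_mul_cos_of_isSubsolution {t W K : ℝ} {M : ℝ → ℝ} (ht : t ∈ Ioc 0 T)
    (hθ : θ ∈ Ioo 0 (π / 2)) (hζ : ζ < κstar * θ ^ 2) (hlam₀ : 0 < lam₀)
    (hc₁ : 0 < lam₁ * cos θ - θ * sin θ) (hκstar : 0 ≤ κstar) (hk : ∀ s, κstar ≤ k s)
    (hu : IsSubsolution T lam₀ lam₁ k D₀ D₁ F u ut ux uxx)
    (hM₀ : ∀ s ∈ Ioc 0 t, D₀ s ≤ lam₀ * M s)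
    (hM₁ : ∀ s ∈ Ioc 0 t, D₁ s ≤ (lam₁ * cos θ - θ * sin θ) * M s)
    (hMF : ∀ s ∈ Ioc 0 t, ∀ x ∈ Ioo (0 : ℝ) 1,
      F s x ≤ (κstar * θ ^ 2 - ζ) * M s * cos (θ * x))
    (hW : ∀ x ∈ Icc (0 : ℝ) 1, u 0 x ≤ W * cos (θ * x)) (hK : 0 ≤ K)
    (hKW : exp (-ζ * t) * W ≤ K) (hKM : ∀ s ∈ Ioc 0 t, M s * exp (-ζ * (t - s)) ≤ K) :
    ∀ x ∈ Icc (0 : ℝ) 1, u t x ≤ K * cos (θ * x) := by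
  have hcont : ContinuousOn (expWeighted ζ θ u) (Icc 0 t ×ˢ Icc 0 1) := by
    refine ContinuousOn.div ?_ (by fun_prop) fun p hp => (cos_mul_pos hθ hp.2).ne'
    exact (continuous_exp.comp (by fun_prop)).continuousOn.mul
      (hu.continuousOn.mono (prod_mono (Icc_subset_Icc_right ht.2) subset_rfl))
  obtain ⟨⟨s, y⟩, hsy, hmax⟩ := (isCompact_Icc.prod isCompact_Icc).exists_isMaxOn
    ((nonempty_Icc.2 ht.1.le).prod (nonempty_Icc.2 zero_le_one)) hcont
  obtain ⟨hs, hy⟩ : s ∈ Icc 0 t ∧ y ∈ Icc (0 : ℝ) 1 := hsy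
  suffices hmax_le : expWeighted ζ θ u (s, y) ≤ exp (ζ * t) * K by
    intro x hx
    have h := (isMaxOn_iff.1 hmax (t, x) ⟨right_mem_Icc.2 ht.1.le, hx⟩).trans hmax_le
    rwa [expWeighted, mul_div_assoc, mul_le_mul_iff_right₀ (exp_pos _),
      div_le_iff₀ (cos_mul_pos hθ hx)] at h
  have hη := cos_mul_pos hθ hy
  rcases le_or_gt (u s y) 0 with hneg | hpos
  · exact (div_nonpos_of_nonpos_of_nonneg (mul_nonpos_of_nonneg_of_nonpos (exp_pos _).le hneg)
      hη.le).trans (by positivity)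
  rcases hs.1.eq_or_lt with rfl | hs0
  · have hW' : W ≤ exp (ζ * t) * K := by
      simpa using (exp_mul_le_exp_mul_iff (s := 0)).2 (by simpa [mul_comm] using hKW)
    rw [expWeighted, mul_zero, exp_zero, one_mul, div_le_iff₀ hη]
    exact (hW y hy).trans (by gcongr)
  · have hsT : s ∈ Ioc 0 T := ⟨hs0, hs.2.trans ht.2⟩
    have hst : s ∈ Ioc 0 t := ⟨hs0, hs.2⟩
    have hle := le_mul_cos_of_isMaxOn_expWeighted hsT hy hθ hζ hlam₀ hc₁ hκstar (hk s) hu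
      (hM₀ s hst) (hM₁ s hst) (hMF s hst) hpos
      (hmax.on_subset (prod_mono (Icc_subset_Icc_right hs.2) subset_rfl))
    calc expWeighted ζ θ u (s, y) ≤ exp (ζ * s) * M s := by
          rw [expWeighted, mul_div_assoc]
          gcongr
          rwa [div_le_iff₀ hη]
      _ ≤ exp (ζ * t) * K := exp_mul_le_exp_mul_iff.2 (hKM s hst)

end MaximumPrinciple

lemma bddAbove_image_max_mul_exp {t ζ θ lam₀ c₁ γ : ℝ} {d₀ d₁ : ℝ → ℝ} {f : ℝ → ℝ → ℝ}
    (hθ : θ ∈ Ioo 0 (π / 2)) (hζ : 0 ≤ ζ) (hlam₀ : 0 < lam₀) (hc₁ : 0 < c₁) (hγ : 0 < γ)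
    (hd₀ : ContinuousOn d₀ (Icc 0 t)) (hd₁ : ContinuousOn d₁ (Icc 0 t))
    (hf : ContinuousOn (fun p : ℝ × ℝ => f p.1 p.2) (Icc 0 t ×ˢ Icc 0 1)) :
    BddAbove ((fun s => max (max (|d₀ s| / lam₀) (|d₁ s| / c₁))
      (weightedSupNorm θ (f s) (Ioo 0 1) / γ) * exp (-ζ * (t - s))) '' Ioc 0 t) := by
  obtain ⟨C₀, hC₀⟩ := isCompact_Icc.exists_bound_of_continuousOn hd₀
  obtain ⟨C₁, hC₁⟩ := isCompact_Icc.exists_bound_of_continuousOn hd₁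
  obtain ⟨Cf, hCf⟩ := (isCompact_Icc.prod isCompact_Icc).exists_bound_of_continuousOn hf
  refine ⟨max (max (C₀ / lam₀) (C₁ / c₁)) (Cf / cos θ / γ), ?_⟩
  rintro _ ⟨s, hs, rfl⟩
  have hs' : s ∈ Icc 0 t := Ioc_subset_Icc_self hs
  have hfs : weightedSupNorm θ (f s) (Ioo 0 1) ≤ Cf / cos θ :=
    weightedSupNorm_le_div_cos hθ Ioo_subset_Icc_self (nonempty_Ioo.2 zero_lt_one)
      fun x hx => hCf (s, x) ⟨hs', Ioo_subset_Icc_self hx⟩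
  calc _ ≤ max (max (|d₀ s| / lam₀) (|d₁ s| / c₁)) (weightedSupNorm θ (f s) (Ioo 0 1) / γ) :=
        mul_le_of_le_one_right (by positivity) (exp_le_one_iff.2 (by nlinarith [hs.2]))
    _ ≤ _ := by
        gcongr
        exacts [hC₀ s hs', hC₁ s hs']

theorem example3_2_general
    (T : ℝ)
    (κstar : ℝ)
    (κ : (ℝ → ℝ) → ℝ) (hκ : ∀ v : ℝ → ℝ, κstar ≤ κ v)
    (β₀ β₁ : (ℝ → ℝ) → ℝ) (hβ₀ : ∀ v : ℝ → ℝ, 0 ≤ β₀ v) (hβ₁ : ∀ v : ℝ → ℝ, 0 ≤ β₁ v)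
    (lam₀ lam₁ : ℝ) (hlam₀ : 0 < lam₀)
    (θ : ℝ) (hθ : θ ∈ Set.Ioo 0 (Real.pi / 2)) (hθlam : θ * Real.tan θ < lam₁)
    (d₀ d₁ : ℝ → ℝ) (hd₀ : ContinuousOn d₀ (Set.Icc 0 T)) (hd₁ : ContinuousOn d₁ (Set.Icc 0 T))
    (f : ℝ → ℝ → ℝ)
    (hf_cont : ContinuousOn (fun p : ℝ × ℝ => f p.1 p.2) (Set.Icc 0 T ×ˢ Set.Icc 0 1))
    (u ut ux uxx : ℝ → ℝ → ℝ)
    (hu_cont : ContinuousOn (fun p : ℝ × ℝ => u p.1 p.2) (Set.Icc 0 T ×ˢ Set.Icc 0 1))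
    (hut : ∀ t ∈ Set.Ioc (0:ℝ) T, ∀ x ∈ Set.Icc (0:ℝ) 1,
      HasDerivWithinAt (fun τ => u τ x) (ut t x) (Set.Ioc 0 T) t)
    (hux : ∀ t ∈ Set.Ioc (0:ℝ) T, ∀ x ∈ Set.Icc (0:ℝ) 1,
      HasDerivWithinAt (u t) (ux t x) (Set.Icc 0 1) x)
    (huxx : ∀ t ∈ Set.Ioc (0:ℝ) T, ∀ x ∈ Set.Icc (0:ℝ) 1,
      HasDerivWithinAt (ux t) (uxx t x) (Set.Icc 0 1) x)
    (hpde : ∀ t ∈ Set.Ioc (0:ℝ) T, ∀ x ∈ Set.Icc (0:ℝ) 1,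
      ut t x = κ (u t) * uxx t x + f t x)
    (hbc : ∀ t ∈ Set.Ioc (0:ℝ) T,
      ux t 0 = (lam₀ + β₀ (u t)) * u t 0 + d₀ t ∧
      ux t 1 = -(lam₁ + β₁ (u t)) * u t 1 + d₁ t) :
    ∀ ζ ∈ Set.Ico (0:ℝ) (κstar * θ ^ 2), ∀ t ∈ Set.Ioc (0:ℝ) T,
      sSup ((fun x => |u t x| / Real.cos (θ * x)) '' Set.Icc 0 1) ≤
        max (Real.exp (-ζ * t) *
              sSup ((fun x => |u 0 x| / Real.cos (θ * x)) '' Set.Icc 0 1))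
          (sSup ((fun s =>
              max (max (|d₀ s| / lam₀)
                  (|d₁ s| / (lam₁ * Real.cos θ - θ * Real.sin θ)))
                (sSup ((fun x => |f s x| / Real.cos (θ * x)) '' Set.Ioo 0 1) /
                  (κstar * θ ^ 2 - ζ)) *
              Real.exp (-ζ * (t - s))) '' Set.Ioc 0 t)) := by
  intro ζ hζ t ht
  have hκstar : 0 ≤ κstar := by nlinarith [hζ.1, hζ.2, sq_nonneg θ]
  have hc₁ := mul_cos_sub_mul_sin_pos hθ hθlam
  have hγ : 0 < κstar * θ ^ 2 - ζ := sub_pos.2 hζ.2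
  have hIcc : Icc 0 t ⊆ Icc 0 T := Icc_subset_Icc_right ht.2
  set W := weightedSupNorm θ (u 0) (Icc 0 1)
  set M : ℝ → ℝ := fun s => max (max (|d₀ s| / lam₀) (|d₁ s| / (lam₁ * cos θ - θ * sin θ)))
    (weightedSupNorm θ (f s) (Ioo 0 1) / (κstar * θ ^ 2 - ζ))
  have hW : ∀ x ∈ Icc (0 : ℝ) 1, |u 0 x| ≤ W * cos (θ * x) := fun x hx =>
    abs_le_weightedSupNorm_mul_cos hθ (hu_cont.uncurry_left 0 (hIcc (left_mem_Icc.2 ht.1.le)))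
      subset_rfl hx
  have hMF : ∀ s ∈ Ioc 0 t, ∀ x ∈ Ioo (0 : ℝ) 1,
      |f s x| ≤ (κstar * θ ^ 2 - ζ) * M s * cos (θ * x) := fun s hs x hx =>
    (abs_le_weightedSupNorm_mul_cos hθ (hf_cont.uncurry_left s (hIcc (Ioc_subset_Icc_self hs)))
      Ioo_subset_Icc_self hx).trans (mul_le_mul_of_nonneg_right
        ((div_le_iff₀' hγ).1 (le_max_right _ _)) (cos_mul_pos hθ (Ioo_subset_Icc_self hx)).le)
  have hS := bddAbove_image_max_mul_exp hθ hζ.1 hlam₀ hc₁ hγ (hd₀.mono hIcc) (hd₁.mono hIcc)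
    (hf_cont.mono (prod_mono hIcc subset_rfl))
  set K := max (exp (-ζ * t) * W) (sSup ((fun s => M s * exp (-ζ * (t - s))) '' Ioc 0 t))
  have hbound : ∀ σ : ℝ, |σ| = 1 → ∀ x ∈ Icc (0 : ℝ) 1, σ * u t x ≤ K * cos (θ * x) :=
    fun σ hσ => le_mul_cos_of_isSubsolution ht hθ hζ.2 hlam₀ hc₁ hκstar (fun s => hκ (u s))
      (IsSubsolution.of_solution hσ hβ₀ hβ₁ hu_cont hut hux huxx hpde hbc)
      (fun s _ => (div_le_iff₀' hlam₀).1 ((le_max_left _ _).trans (le_max_left _ _)))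
      (fun s _ => (div_le_iff₀' hc₁).1 ((le_max_right _ _).trans (le_max_left _ _))) hMF
      (fun x hx => (mul_le_abs_of_abs_eq_one hσ _).trans (hW x hx))
      (le_max_of_le_left (mul_nonneg (exp_pos _).le (weightedSupNorm_nonneg hθ subset_rfl)))
      (le_max_left _ _)
      (fun s hs => (le_csSup hS ⟨s, hs, rfl⟩).trans (le_max_right _ _))
  exact weightedSupNorm_le (K := K) hθ subset_rfl (nonempty_Icc.2 zero_le_one) fun x hx =>
    abs_le.2 ⟨by linarith [hbound (-1) (by simp) x hx], by simpa using hbound 1 (by simp) x hx⟩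

/-- **Example 3.2** (Karafyllis–Krstic): heat equation with non-local diffusion
coefficient `κ(u[t]) ≥ κ* > 0` and nonlinear, non-local Robin-type boundary conditions.
With `θ ∈ (0,π/2)` satisfying `θ·tan(θ) < λ₁` and weight `η(x) = cos(θx)`, every
classical solution satisfies a fading memory ISS estimate in the weighted sup norm. -/
theorem example3_2
    (T : ℝ) (hT : 0 < T)
    (κstar : ℝ) (hκstar : 0 < κstar)
    (κ : (ℝ → ℝ) → ℝ) (hκ : ∀ v : ℝ → ℝ, κstar ≤ κ v)
    (β₀ β₁ : (ℝ → ℝ) → ℝ) (hβ₀ : ∀ v : ℝ → ℝ, 0 ≤ β₀ v) (hβ₁ : ∀ v : ℝ → ℝ, 0 ≤ β₁ v)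
    (lam₀ lam₁ : ℝ) (hlam₀ : 0 < lam₀) (hlam₁ : 0 < lam₁)
    (θ : ℝ) (hθ : θ ∈ Set.Ioo 0 (Real.pi / 2)) (hθlam : θ * Real.tan θ < lam₁)
    (d₀ d₁ : ℝ → ℝ) (hd₀ : ContinuousOn d₀ (Set.Icc 0 T)) (hd₁ : ContinuousOn d₁ (Set.Icc 0 T))
    (f : ℝ → ℝ → ℝ)
    (hf_cont : ContinuousOn (fun p : ℝ × ℝ => f p.1 p.2) (Set.Icc 0 T ×ˢ Set.Icc 0 1))
    (u ut ux uxx : ℝ → ℝ → ℝ)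
    (hu_cont : ContinuousOn (fun p : ℝ × ℝ => u p.1 p.2) (Set.Icc 0 T ×ˢ Set.Icc 0 1))
    (hut : ∀ t ∈ Set.Ioc (0:ℝ) T, ∀ x ∈ Set.Icc (0:ℝ) 1,
      HasDerivWithinAt (fun τ => u τ x) (ut t x) (Set.Ioc 0 T) t)
    (hut_cont : ContinuousOn (fun p : ℝ × ℝ => ut p.1 p.2) (Set.Ioc 0 T ×ˢ Set.Icc 0 1))
    (hux : ∀ t ∈ Set.Ioc (0:ℝ) T, ∀ x ∈ Set.Icc (0:ℝ) 1,
      HasDerivWithinAt (u t) (ux t x) (Set.Icc 0 1) x)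
    (huxx : ∀ t ∈ Set.Ioc (0:ℝ) T, ∀ x ∈ Set.Icc (0:ℝ) 1,
      HasDerivWithinAt (ux t) (uxx t x) (Set.Icc 0 1) x)
    (huxx_cont : ∀ t ∈ Set.Ioc (0:ℝ) T, ContinuousOn (uxx t) (Set.Icc 0 1))
    (hpde : ∀ t ∈ Set.Ioc (0:ℝ) T, ∀ x ∈ Set.Icc (0:ℝ) 1,
      ut t x = κ (u t) * uxx t x + f t x)
    (hbc : ∀ t ∈ Set.Ioc (0:ℝ) T,
      ux t 0 = (lam₀ + β₀ (u t)) * u t 0 + d₀ t ∧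
      ux t 1 = -(lam₁ + β₁ (u t)) * u t 1 + d₁ t) :
    ∀ ζ ∈ Set.Ico (0:ℝ) (κstar * θ ^ 2), ∀ t ∈ Set.Ioc (0:ℝ) T,
      sSup ((fun x => |u t x| / Real.cos (θ * x)) '' Set.Icc 0 1) ≤
        max (Real.exp (-ζ * t) *
              sSup ((fun x => |u 0 x| / Real.cos (θ * x)) '' Set.Icc 0 1))
          (sSup ((fun s =>
              max (max (|d₀ s| / lam₀)
                  (|d₁ s| / (lam₁ * Real.cos θ - θ * Real.sin θ)))
                (sSup ((fun x => |f s x| / Real.cos (θ * x)) '' Set.Ioo 0 1) /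
                  (κstar * θ ^ 2 - ζ)) *
              Real.exp (-ζ * (t - s))) '' Set.Ioc 0 t)) :=
  example3_2_general T κstar κ hκ β₀ β₁ hβ₀ hβ₁ lam₀ lam₁ hlam₀ θ hθ hθlam d₀ d₁ hd₀ hd₁ f hf_cont u
    ut ux uxx hu_cont hut hux huxx hpde hbc
end

section
/- Let κ, g ∈ C⁰(ℝ) with κ(u) > 0 for all u ∈ ℝ, and define γ : ℝ → ℝ by γ(u) := ∫₀ᵘ exp( ∫₀ˢ g(l)/κ(l) dl ) ds. If u ∈ C⁰([0,T] × [0,1]) ∩ C¹((0,T] × [0,1]) with u[t] ∈ C²([0,1]) for t ∈ (0,T] is a classical solution of ∂u/∂t(t,x) = κ(u(t,x))·∂²u/∂x²(t,x) + g(u(t,x))·(∂u/∂x(t,x))² on (0,T] × [0,1] with u(t,0) = d₀(t), u(t,1) = d₁(t) for t ∈ [0,T], then the function w(t,x) := γ(u(t,x)) satisfies ∂w/∂t(t,x) = κ(γ⁻¹(w(t,x)))·∂²w/∂x²(t,x) for all (t,x) ∈ (0,T] × [0,1], together with w(t,0) = γ(d₀(t)) and w(t,1) = γ(d₁(t)) for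 all t ∈ [0,T]. -/
open Set Filter intervalIntegral


private lemma prim_hasDerivAt' {f : ℝ → ℝ} (hf : Continuous f) (v : ℝ) :
    HasDerivAt (fun w => ∫ x in (0:ℝ)..w, f x) (f v) v :=
  intervalIntegral.integral_hasDerivAt_right (hf.intervalIntegrable _ _)
    (hf.stronglyMeasurableAtFilter _ _) hf.continuousAt

/-- **Transformation in Example 3.3** (Karafyllis–Krstic): with
`γ(v) = ∫₀ᵛ exp(∫₀ˢ g(l)/κ(l) dl) ds`, the function `w(t,x) = γ(u(t,x))` transforms the
"real" heat equation `u_t = κ(u)u_xx + g(u)u_x²` with Dirichlet data `d₀, d₁` into the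
heat equation `w_t = κ(γ⁻¹(w))·w_xx` with Dirichlet data `γ(d₀), γ(d₁)`. -/
theorem example3_3_transformation
    (T : ℝ) (hT : 0 < T)
    (κ g : ℝ → ℝ) (hκ_cont : Continuous κ) (hg_cont : Continuous g)
    (hκ_pos : ∀ v : ℝ, 0 < κ v)
    (γ : ℝ → ℝ)
    (hγ_def : ∀ v : ℝ, γ v = ∫ s in (0:ℝ)..v, Real.exp (∫ l in (0:ℝ)..s, g l / κ l))
    (d₀ d₁ : ℝ → ℝ) (hd₀ : ContinuousOn d₀ (Set.Icc 0 T)) (hd₁ : ContinuousOn d₁ (Set.Icc 0 T))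
    (u ut ux uxx : ℝ → ℝ → ℝ)
    (hu_cont : ContinuousOn (fun p : ℝ × ℝ => u p.1 p.2) (Set.Icc 0 T ×ˢ Set.Icc 0 1))
    (hut : ∀ t ∈ Set.Ioc (0:ℝ) T, ∀ x ∈ Set.Icc (0:ℝ) 1,
      HasDerivWithinAt (fun τ => u τ x) (ut t x) (Set.Ioc 0 T) t)
    (hut_cont : ContinuousOn (fun p : ℝ × ℝ => ut p.1 p.2) (Set.Ioc 0 T ×ˢ Set.Icc 0 1))
    (hux : ∀ t ∈ Set.Ioc (0:ℝ) T, ∀ x ∈ Set.Icc (0:ℝ) 1,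
      HasDerivWithinAt (u t) (ux t x) (Set.Icc 0 1) x)
    (huxx : ∀ t ∈ Set.Ioc (0:ℝ) T, ∀ x ∈ Set.Icc (0:ℝ) 1,
      HasDerivWithinAt (ux t) (uxx t x) (Set.Icc 0 1) x)
    (huxx_cont : ∀ t ∈ Set.Ioc (0:ℝ) T, ContinuousOn (uxx t) (Set.Icc 0 1))
    (hpde : ∀ t ∈ Set.Ioc (0:ℝ) T, ∀ x ∈ Set.Icc (0:ℝ) 1,
      ut t x = κ (u t x) * uxx t x + g (u t x) * (ux t x) ^ 2)
    (hbc : ∀ t ∈ Set.Icc (0:ℝ) T, u t 0 = d₀ t ∧ u t 1 = d₁ t) :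
    (∃ wt wx wxx : ℝ → ℝ → ℝ, ∀ t ∈ Set.Ioc (0:ℝ) T, ∀ x ∈ Set.Icc (0:ℝ) 1,
      HasDerivWithinAt (fun y => γ (u t y)) (wx t x) (Set.Icc 0 1) x ∧
      HasDerivWithinAt (fun y => wx t y) (wxx t x) (Set.Icc 0 1) x ∧
      HasDerivWithinAt (fun τ => γ (u τ x)) (wt t x) (Set.Ioc 0 T) t ∧
      wt t x = κ (Function.invFun γ (γ (u t x))) * wxx t x) ∧
    (∀ t ∈ Set.Icc (0:ℝ) T, γ (u t 0) = γ (d₀ t) ∧ γ (u t 1) = γ (d₁ t)) := by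
  have hgk : Continuous fun l => g l / κ l := hg_cont.div hκ_cont fun l => (hκ_pos l).ne'
  have hEd : ∀ v, HasDerivAt (fun v => Real.exp (∫ l in (0:ℝ)..v, g l / κ l))
      (Real.exp (∫ l in (0:ℝ)..v, g l / κ l) * (g v / κ v)) v :=
    fun v => (prim_hasDerivAt' hgk v).exp
  have hEc : Continuous fun v => Real.exp (∫ l in (0:ℝ)..v, g l / κ l) :=
    continuous_iff_continuousAt.2 fun v => (hEd v).continuousAt
  have hγ' : ∀ v, HasDerivAt γ (Real.exp (∫ l in (0:ℝ)..v, g l / κ l)) v := by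
    intro v
    have h := prim_hasDerivAt' hEc v
    rw [show γ = _ from funext hγ_def]
    exact h
  have hmono : StrictMono γ := by
    apply strictMono_of_deriv_pos
    intro v
    rw [(hγ' v).deriv]
    exact Real.exp_pos _
  have hinv : ∀ v, Function.invFun γ (γ v) = v :=
    fun v => Function.leftInverse_invFun hmono.injective v
  constructor
  · refine ⟨fun t x => Real.exp (∫ l in (0:ℝ)..(u t x), g l / κ l) * ut t x,
      fun t x => Real.exp (∫ l in (0:ℝ)..(u t x), g l / κ l) * ux t x,
      fun t x => Real.exp (∫ l in (0:ℝ)..(u t x), g l / κ l) * (g (u t x) / κ (u t x))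
          * ux t x * ux t x
        + Real.exp (∫ l in (0:ℝ)..(u t x), g l / κ l) * uxx t x, ?_⟩
    intro t ht x hx
    refine ⟨(hγ' (u t x)).comp_hasDerivWithinAt x (hux t ht x hx), ?_,
      (hγ' (u t x)).comp_hasDerivWithinAt t (hut t ht x hx), ?_⟩
    · have h1 : HasDerivWithinAt (fun y => Real.exp (∫ l in (0:ℝ)..(u t y), g l / κ l))
          (Real.exp (∫ l in (0:ℝ)..(u t x), g l / κ l) * (g (u t x) / κ (u t x)) * ux t x)
          (Set.Icc 0 1) x :=
        (hEd (u t x)).comp_hasDerivWithinAt x (hux t ht x hx)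
      exact h1.mul (huxx t ht x hx)
    · simp only [hinv, hpde t ht x hx]
      have hk := (hκ_pos (u t x)).ne'
      field_simp
      ring
  · intro t ht
    exact ⟨congrArg γ (hbc t ht).1, congrArg γ (hbc t ht).2⟩
end

section
/- Consider the heat equation ∂w/∂t(t,x) = κ(γ⁻¹(w(t,x)))·∂²w/∂x²(t,x) on (0,T] × [0,1] with w(t,0) = δ₀(t), w(t,1) = δ₁(t) for t ∈ [0,T], where δ₀, δ₁ ∈ C⁰([0,T]), γ : ℝ → ℝ is a continuous strictly increasing bijection, and κ ∈ C⁰(ℝ) satisfies κ(u) ≥ κ* > 0 for all u ∈ ℝ. Let φ ∈ (0, π/2) and set η(x) := sin((π − 2φ)x + φ). Then every classical solution w ∈ C⁰([0,T] × [0,1]) ∩ C¹((0,T] × [0,1]) with w[t] ∈ C²([0,1]) for t ∈ (0,T] satisfies, for all ζ ∈ (0, κ*(π − 2φ)²) and t ∈ (0,T]: ‖w[t]‖_∞ ≤ (1/sin(φ))·max( exp(−ζt)·‖w[0]‖_∞, sup_{0<s≤t} max( |δ₀(s)|, |δ₁(s)| )·exp(−ζ(t−s)) ). -/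
/-!
Comparison with the separable barrier `V(s, x) = C e^{ζ (t - s)} η(x) / sin φ`, where
`η(x) = sin((π - 2φ) x + φ)`. Since `η'' = -(π - 2φ)² η`, we get
`∂ₛV - a ∂ₓₓV = (a (π - 2φ)² - ζ) V > 0` for every coefficient `a ≥ κ*`, so `±w - V` is a strict
subsolution and cannot attain a nonnegative maximum off the parabolic boundary. As
`sin φ ≤ η ≤ 1` on `[0, 1]`, the barrier dominates `±w` on the parabolic boundary as soon as `C`
exceeds the right-hand side of the estimate (without the factor `1 / sin φ`), and then
`|w(t, ·)| ≤ V(t, ·) ≤ C / sin φ`.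
-/

open Set Filter Real Topology

theorem Real.sin_le_sin_of_le_of_le_pi_sub {φ θ : ℝ} (hφ : -(π / 2) ≤ φ) (hφθ : φ ≤ θ)
    (hθ : θ ≤ π - φ) : sin φ ≤ sin θ := by
  rcases le_total θ (π / 2) with h | h
  · exact sin_le_sin_of_le_of_le_pi_div_two hφ h hφθ
  · rw [← sin_pi_sub θ]
    exact sin_le_sin_of_le_of_le_pi_div_two hφ (by linarith) (by linarith)

theorem IsLocalMax.secondDeriv_nonpos {f f' : ℝ → ℝ} {f'' x₀ : ℝ} (h : IsLocalMax f x₀)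
    (hf : ∀ᶠ x in 𝓝 x₀, HasDerivAt f (f' x) x) (hf' : HasDerivAt f' f'' x₀) : f'' ≤ 0 := by
  by_contra! hpos
  have hderiv : deriv f =ᶠ[𝓝 x₀] f' := hf.mono fun x hx => hx.deriv
  have hderiv2 : deriv (deriv f) x₀ = f'' := (hf'.congr_of_eventuallyEq hderiv).deriv
  have hmin : IsLocalMin f x₀ :=
    isLocalMin_of_deriv_deriv_pos (hderiv2 ▸ hpos) h.deriv_eq_zero hf.self_of_nhds.continuousAt
  -- `x₀` is both a local maximum and a local minimum, so `f` is locally constant near `x₀`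
  have hconst : f =ᶠ[𝓝 x₀] fun _ => f x₀ := (h.and hmin).mono fun x hx => le_antisymm hx.1 hx.2
  have hderiv0 : deriv f =ᶠ[𝓝 x₀] fun _ => 0 :=
    hconst.eventuallyEq_nhds.mono fun x hx => by rw [hx.deriv_eq, deriv_const]
  rw [hderiv0.deriv_eq, deriv_const] at hderiv2
  exact hpos.ne hderiv2

theorem IsMaxOn.nonneg_of_hasDerivWithinAt_Ioc {g : ℝ → ℝ} {g' a b : ℝ} (hab : a < b)
    (h : IsMaxOn g (Ioc a b) b) (hg : HasDerivWithinAt g g' (Ioc a b) b) : 0 ≤ g' := by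
  have hslope : Tendsto (slope g b) (𝓝[Ioo a b] b) (𝓝 g') :=
    (hasDerivWithinAt_iff_tendsto_slope' (lt_irrefl b ·.2)).1 (hg.mono Ioo_subset_Ioc_self)
  have : (𝓝[Ioo a b] b).NeBot := right_nhdsWithin_Ioo_neBot hab
  refine ge_of_tendsto hslope (eventually_nhdsWithin_of_forall fun s hs => ?_)
  rw [slope_def_field]
  exact div_nonneg_of_nonpos (sub_nonpos.2 (h ⟨hs.1, hs.2.le⟩)) (sub_nonpos.2 hs.2.le)

theorem nonpos_of_strict_subsolution {t : ℝ} {a z zt zx zxx : ℝ → ℝ → ℝ}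
    (hz : ContinuousOn (fun p : ℝ × ℝ => z p.1 p.2) (Icc 0 t ×ˢ Icc 0 1))
    (hzt : ∀ s ∈ Ioc 0 t, ∀ x ∈ Ioo (0 : ℝ) 1,
      HasDerivWithinAt (fun τ => z τ x) (zt s x) (Ioc 0 t) s)
    (hzx : ∀ s ∈ Ioc 0 t, ∀ x ∈ Ioo (0 : ℝ) 1, HasDerivAt (z s) (zx s x) x)
    (hzxx : ∀ s ∈ Ioc 0 t, ∀ x ∈ Ioo (0 : ℝ) 1, HasDerivAt (zx s) (zxx s x) x)
    (ha : ∀ s ∈ Ioc 0 t, ∀ x ∈ Ioo (0 : ℝ) 1, 0 ≤ a s x)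
    (hsub : ∀ s ∈ Ioc 0 t, ∀ x ∈ Ioo (0 : ℝ) 1, zt s x < a s x * zxx s x)
    (h0 : ∀ x ∈ Icc (0 : ℝ) 1, z 0 x ≤ 0) (hl : ∀ s ∈ Ioc 0 t, z s 0 ≤ 0)
    (hr : ∀ s ∈ Ioc 0 t, z s 1 ≤ 0) :
    ∀ s ∈ Icc 0 t, ∀ x ∈ Icc (0 : ℝ) 1, z s x ≤ 0 := by
  intro s hs x hx
  obtain ⟨⟨s₀, x₀⟩, ⟨hs₀, hx₀⟩, hmax⟩ :=
    (isCompact_Icc.prod isCompact_Icc).exists_isMaxOn ⟨(s, x), hs, hx⟩ hz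
  have hmax' : ∀ s ∈ Icc 0 t, ∀ x ∈ Icc (0 : ℝ) 1, z s x ≤ z s₀ x₀ := fun s hs x hx =>
    hmax (mk_mem_prod hs hx)
  refine (hmax' s hs x hx).trans ?_
  rcases hs₀.1.eq_or_lt with rfl | hs₀0
  · exact h0 x₀ hx₀
  rcases hx₀.1.eq_or_lt with rfl | hx₀0
  · exact hl s₀ ⟨hs₀0, hs₀.2⟩
  rcases hx₀.2.eq_or_lt with rfl | hx₀1
  · exact hr s₀ ⟨hs₀0, hs₀.2⟩
  -- an interior maximum of a strict subsolution is impossible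
  exfalso
  have hs₀' : s₀ ∈ Ioc 0 t := ⟨hs₀0, hs₀.2⟩
  have hx₀' : x₀ ∈ Ioo (0 : ℝ) 1 := ⟨hx₀0, hx₀1⟩
  have htime : 0 ≤ zt s₀ x₀ :=
    IsMaxOn.nonneg_of_hasDerivWithinAt_Ioc hs₀0
      (fun s hs => hmax' s ⟨hs.1.le, hs.2.trans hs₀.2⟩ x₀ hx₀)
      ((hzt s₀ hs₀' x₀ hx₀').mono (Ioc_subset_Ioc_right hs₀.2))
  have hspace : zxx s₀ x₀ ≤ 0 :=
    IsLocalMax.secondDeriv_nonpos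
      (mem_of_superset (Icc_mem_nhds hx₀0 hx₀1) fun x hx => hmax' s₀ hs₀ x hx)
      (mem_of_superset (Ioo_mem_nhds hx₀0 hx₀1) fun x hx => hzx s₀ hs₀' x hx)
      (hzxx s₀ hs₀' x₀ hx₀')
  linarith [hsub s₀ hs₀' x₀ hx₀', mul_nonpos_of_nonneg_of_nonpos (ha s₀ hs₀' x₀ hx₀') hspace]

noncomputable def heatBarrier (ζ P φ s x : ℝ) : ℝ := exp (-ζ * s) * sin (P * x + φ)

theorem hasDerivAt_heatBarrier_time (ζ P φ s x : ℝ) :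
    HasDerivAt (fun s => heatBarrier ζ P φ s x) (-ζ * heatBarrier ζ P φ s x) s :=
  (((hasDerivAt_id' s).const_mul (-ζ)).exp.mul_const (sin (P * x + φ))).congr_deriv
    (by simp only [heatBarrier]; ring)

theorem hasDerivAt_heatBarrier_space (ζ P φ s x : ℝ) :
    HasDerivAt (heatBarrier ζ P φ s) (exp (-ζ * s) * (P * cos (P * x + φ))) x :=
  ((((hasDerivAt_id' x).const_mul P).add_const φ).sin.const_mul (exp (-ζ * s))).congr_deriv
    (by ring)

theorem hasDerivAt_heatBarrier_space_deriv (ζ P φ s x : ℝ) :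
    HasDerivAt (fun y => exp (-ζ * s) * (P * cos (P * y + φ)))
      (-P ^ 2 * heatBarrier ζ P φ s x) x :=
  (((((hasDerivAt_id' x).const_mul P).add_const φ).cos.const_mul P).const_mul
    (exp (-ζ * s))).congr_deriv (by simp only [heatBarrier]; ring)

section Comparison

variable {t c ζ P φ : ℝ} {a u ut ux uxx : ℝ → ℝ → ℝ}

theorem le_mul_heatBarrier_of_boundary
    (hu : ContinuousOn (fun p : ℝ × ℝ => u p.1 p.2) (Icc 0 t ×ˢ Icc 0 1))
    (hut : ∀ s ∈ Ioc 0 t, ∀ x ∈ Ioo (0 : ℝ) 1,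
      HasDerivWithinAt (fun τ => u τ x) (ut s x) (Ioc 0 t) s)
    (hux : ∀ s ∈ Ioc 0 t, ∀ x ∈ Ioo (0 : ℝ) 1, HasDerivAt (u s) (ux s x) x)
    (huxx : ∀ s ∈ Ioc 0 t, ∀ x ∈ Ioo (0 : ℝ) 1, HasDerivAt (ux s) (uxx s x) x)
    (hpde : ∀ s ∈ Ioc 0 t, ∀ x ∈ Ioo (0 : ℝ) 1, ut s x = a s x * uxx s x)
    (ha : ∀ s ∈ Ioc 0 t, ∀ x ∈ Ioo (0 : ℝ) 1, 0 ≤ a s x)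
    (hζ : ∀ s ∈ Ioc 0 t, ∀ x ∈ Ioo (0 : ℝ) 1, ζ < a s x * P ^ 2)
    (hc : 0 < c) (hsin : ∀ x ∈ Ioo (0 : ℝ) 1, 0 < sin (P * x + φ))
    (h0 : ∀ x ∈ Icc (0 : ℝ) 1, u 0 x ≤ c * heatBarrier ζ P φ 0 x)
    (hl : ∀ s ∈ Ioc 0 t, u s 0 ≤ c * heatBarrier ζ P φ s 0)
    (hr : ∀ s ∈ Ioc 0 t, u s 1 ≤ c * heatBarrier ζ P φ s 1) :
    ∀ s ∈ Icc 0 t, ∀ x ∈ Icc (0 : ℝ) 1, u s x ≤ c * heatBarrier ζ P φ s x := by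
  have hV : Continuous fun p : ℝ × ℝ => c * heatBarrier ζ P φ p.1 p.2 := by
    unfold heatBarrier; fun_prop
  have hz := nonpos_of_strict_subsolution (a := a)
    (z := fun s x => u s x - c * heatBarrier ζ P φ s x)
    (zt := fun s x => ut s x - c * (-ζ * heatBarrier ζ P φ s x))
    (zx := fun s x => ux s x - c * (exp (-ζ * s) * (P * cos (P * x + φ))))
    (zxx := fun s x => uxx s x - c * (-P ^ 2 * heatBarrier ζ P φ s x))
    (hu.sub hV.continuousOn)
    (fun s hs x hx => (hut s hs x hx).sub
      ((hasDerivAt_heatBarrier_time ζ P φ s x).const_mul c).hasDerivWithinAt)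
    (fun s hs x hx => (hux s hs x hx).sub ((hasDerivAt_heatBarrier_space ζ P φ s x).const_mul c))
    (fun s hs x hx => (huxx s hs x hx).sub
      ((hasDerivAt_heatBarrier_space_deriv ζ P φ s x).const_mul c))
    ha
    (fun s hs x hx => by
      have hVpos : 0 < c * heatBarrier ζ P φ s x := mul_pos hc (mul_pos (exp_pos _) (hsin x hx))
      rw [hpde s hs x hx]
      nlinarith [mul_pos (sub_pos.2 (hζ s hs x hx)) hVpos])
    (fun x hx => sub_nonpos.2 (h0 x hx)) (fun s hs => sub_nonpos.2 (hl s hs))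
    (fun s hs => sub_nonpos.2 (hr s hs))
  exact fun s hs x hx => sub_nonpos.1 (hz s hs x hx)

theorem abs_le_mul_heatBarrier_of_boundary
    (hu : ContinuousOn (fun p : ℝ × ℝ => u p.1 p.2) (Icc 0 t ×ˢ Icc 0 1))
    (hut : ∀ s ∈ Ioc 0 t, ∀ x ∈ Ioo (0 : ℝ) 1,
      HasDerivWithinAt (fun τ => u τ x) (ut s x) (Ioc 0 t) s)
    (hux : ∀ s ∈ Ioc 0 t, ∀ x ∈ Ioo (0 : ℝ) 1, HasDerivAt (u s) (ux s x) x)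
    (huxx : ∀ s ∈ Ioc 0 t, ∀ x ∈ Ioo (0 : ℝ) 1, HasDerivAt (ux s) (uxx s x) x)
    (hpde : ∀ s ∈ Ioc 0 t, ∀ x ∈ Ioo (0 : ℝ) 1, ut s x = a s x * uxx s x)
    (ha : ∀ s ∈ Ioc 0 t, ∀ x ∈ Ioo (0 : ℝ) 1, 0 ≤ a s x)
    (hζ : ∀ s ∈ Ioc 0 t, ∀ x ∈ Ioo (0 : ℝ) 1, ζ < a s x * P ^ 2)
    (hc : 0 < c) (hsin : ∀ x ∈ Ioo (0 : ℝ) 1, 0 < sin (P * x + φ))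
    (h0 : ∀ x ∈ Icc (0 : ℝ) 1, |u 0 x| ≤ c * heatBarrier ζ P φ 0 x)
    (hl : ∀ s ∈ Ioc 0 t, |u s 0| ≤ c * heatBarrier ζ P φ s 0)
    (hr : ∀ s ∈ Ioc 0 t, |u s 1| ≤ c * heatBarrier ζ P φ s 1) :
    ∀ s ∈ Icc 0 t, ∀ x ∈ Icc (0 : ℝ) 1, |u s x| ≤ c * heatBarrier ζ P φ s x := by
  have hupper := le_mul_heatBarrier_of_boundary hu hut hux huxx hpde ha hζ hc hsin
    (fun x hx => (le_abs_self _).trans (h0 x hx)) (fun s hs => (le_abs_self _).trans (hl s hs))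
    (fun s hs => (le_abs_self _).trans (hr s hs))
  have hlower := le_mul_heatBarrier_of_boundary (u := fun s x => -u s x)
    (ut := fun s x => -ut s x) (ux := fun s x => -ux s x) (uxx := fun s x => -uxx s x)
    hu.neg (fun s hs x hx => (hut s hs x hx).neg) (fun s hs x hx => (hux s hs x hx).neg)
    (fun s hs x hx => (huxx s hs x hx).neg)
    (fun s hs x hx => by simp only [hpde s hs x hx, mul_neg]) ha hζ hc hsin
    (fun x hx => (neg_le_abs _).trans (h0 x hx)) (fun s hs => (neg_le_abs _).trans (hl s hs))
    (fun s hs => (neg_le_abs _).trans (hr s hs))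
  exact fun s hs x hx => abs_le.2 ⟨neg_le.1 (hlower s hs x hx), hupper s hs x hx⟩

end Comparison

theorem IsCompact.bddAbove_image_of_eqOn {α : Type*} [TopologicalSpace α] {f g : α → ℝ}
    {K S : Set α} (hK : IsCompact K) (hg : ContinuousOn g K) (hS : S ⊆ K) (hfg : EqOn f g S) :
    BddAbove (f '' S) :=
  hfg.image_eq ▸ (hK.bddAbove_image hg).mono (image_mono hS)

theorem abs_le_div_sin_of_parabolic_boundary_of_pos {T t κ ζ φ C : ℝ} {a u ut ux uxx : ℝ → ℝ → ℝ}
    (ht : t ∈ Ioc 0 T) (hφ : φ ∈ Ioo 0 (π / 2)) (hκ : 0 ≤ κ)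
    (hζ : ζ < κ * (π - 2 * φ) ^ 2) (hC : 0 < C)
    (hu : ContinuousOn (fun p : ℝ × ℝ => u p.1 p.2) (Icc 0 T ×ˢ Icc 0 1))
    (hut : ∀ s ∈ Ioc 0 T, ∀ x ∈ Icc (0 : ℝ) 1,
      HasDerivWithinAt (fun τ => u τ x) (ut s x) (Ioc 0 T) s)
    (hux : ∀ s ∈ Ioc 0 T, ∀ x ∈ Icc (0 : ℝ) 1, HasDerivWithinAt (u s) (ux s x) (Icc 0 1) x)
    (huxx : ∀ s ∈ Ioc 0 T, ∀ x ∈ Icc (0 : ℝ) 1,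
      HasDerivWithinAt (ux s) (uxx s x) (Icc 0 1) x)
    (hpde : ∀ s ∈ Ioc 0 T, ∀ x ∈ Icc (0 : ℝ) 1, ut s x = a s x * uxx s x)
    (ha : ∀ s ∈ Ioc 0 T, ∀ x ∈ Icc (0 : ℝ) 1, κ ≤ a s x)
    (h0 : ∀ x ∈ Icc (0 : ℝ) 1, |u 0 x| ≤ C * exp (ζ * t))
    (hl : ∀ s ∈ Ioc 0 t, |u s 0| ≤ C * exp (ζ * (t - s)))
    (hr : ∀ s ∈ Ioc 0 t, |u s 1| ≤ C * exp (ζ * (t - s))) :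
    ∀ x ∈ Icc (0 : ℝ) 1, |u t x| ≤ C / sin φ := by
  obtain ⟨ht0, htT⟩ := ht
  obtain ⟨hφ0, hφ1⟩ := hφ
  have hsinφ : 0 < sin φ := sin_pos_of_pos_of_lt_pi hφ0 (by linarith [pi_pos])
  have hsin : ∀ x ∈ Icc (0 : ℝ) 1, sin φ ≤ sin ((π - 2 * φ) * x + φ) := fun x hx =>
    sin_le_sin_of_le_of_le_pi_sub (by linarith) (by nlinarith [hx.1]) (by nlinarith [hx.2])
  have hV : ∀ s x, C * exp (ζ * t) / sin φ * heatBarrier ζ (π - 2 * φ) φ s x =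
      C * exp (ζ * (t - s)) * (sin ((π - 2 * φ) * x + φ) / sin φ) := fun s x => by
    rw [heatBarrier, show ζ * (t - s) = ζ * t + -ζ * s by ring, exp_add]
    ring
  have hVedge : ∀ s, C * exp (ζ * (t - s)) * (sin φ / sin φ) = C * exp (ζ * (t - s)) :=
    fun s => by rw [div_self hsinφ.ne', mul_one]
  have hIoc : Ioc 0 t ⊆ Ioc 0 T := Ioc_subset_Ioc_right htT
  have hbound := abs_le_mul_heatBarrier_of_boundary (t := t) (c := C * exp (ζ * t) / sin φ) (a := a)
    (hu.mono (prod_mono (Icc_subset_Icc_right htT) subset_rfl))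
    (fun s hs x hx => (hut s (hIoc hs) x (Ioo_subset_Icc_self hx)).mono hIoc)
    (fun s hs x hx => (hux s (hIoc hs) x (Ioo_subset_Icc_self hx)).hasDerivAt
      (Icc_mem_nhds hx.1 hx.2))
    (fun s hs x hx => (huxx s (hIoc hs) x (Ioo_subset_Icc_self hx)).hasDerivAt
      (Icc_mem_nhds hx.1 hx.2))
    (fun s hs x hx => hpde s (hIoc hs) x (Ioo_subset_Icc_self hx))
    (fun s hs x hx => hκ.trans (ha s (hIoc hs) x (Ioo_subset_Icc_self hx)))
    (fun s hs x hx => hζ.trans_le (mul_le_mul_of_nonneg_right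
      (ha s (hIoc hs) x (Ioo_subset_Icc_self hx)) (sq_nonneg _)))
    (by positivity) (fun x hx => hsinφ.trans_le (hsin x (Ioo_subset_Icc_self hx)))
    (fun x hx => by
      rw [hV, sub_zero]
      exact (h0 x hx).trans (le_mul_of_one_le_right (by positivity)
        ((one_le_div hsinφ).2 (hsin x hx))))
    (fun s hs => by rw [hV, mul_zero, zero_add, hVedge]; exact hl s hs)
    (fun s hs => by
      rw [hV, mul_one, show π - 2 * φ + φ = π - φ by ring, sin_pi_sub, hVedge]
      exact hr s hs)
  intro x hx
  calc |u t x| ≤ C * exp (ζ * (t - t)) * (sin ((π - 2 * φ) * x + φ) / sin φ) :=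
        hV t x ▸ hbound t ⟨ht0.le, le_rfl⟩ x hx
    _ ≤ C * exp (ζ * (t - t)) * (1 / sin φ) := by gcongr; exact sin_le_one _
    _ = C / sin φ := by rw [sub_self, mul_zero, exp_zero, mul_one, mul_one_div]

theorem le_mul_exp_of_mul_exp_neg_le {a b c y : ℝ} (h : a * exp (-c * y) ≤ b) :
    a ≤ b * exp (c * y) := by
  rwa [neg_mul, exp_neg, ← div_eq_mul_inv, div_le_iff₀ (exp_pos _)] at h

theorem abs_le_div_sin_of_parabolic_boundary {T t κ ζ φ C : ℝ} {a u ut ux uxx : ℝ → ℝ → ℝ}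
    (ht : t ∈ Ioc 0 T) (hφ : φ ∈ Ioo 0 (π / 2)) (hκ : 0 ≤ κ)
    (hζ : ζ < κ * (π - 2 * φ) ^ 2)
    (hu : ContinuousOn (fun p : ℝ × ℝ => u p.1 p.2) (Icc 0 T ×ˢ Icc 0 1))
    (hut : ∀ s ∈ Ioc 0 T, ∀ x ∈ Icc (0 : ℝ) 1,
      HasDerivWithinAt (fun τ => u τ x) (ut s x) (Ioc 0 T) s)
    (hux : ∀ s ∈ Ioc 0 T, ∀ x ∈ Icc (0 : ℝ) 1, HasDerivWithinAt (u s) (ux s x) (Icc 0 1) x)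
    (huxx : ∀ s ∈ Ioc 0 T, ∀ x ∈ Icc (0 : ℝ) 1,
      HasDerivWithinAt (ux s) (uxx s x) (Icc 0 1) x)
    (hpde : ∀ s ∈ Ioc 0 T, ∀ x ∈ Icc (0 : ℝ) 1, ut s x = a s x * uxx s x)
    (ha : ∀ s ∈ Ioc 0 T, ∀ x ∈ Icc (0 : ℝ) 1, κ ≤ a s x)
    (h0 : ∀ x ∈ Icc (0 : ℝ) 1, exp (-ζ * t) * |u 0 x| ≤ C)
    (hl : ∀ s ∈ Ioc 0 t, |u s 0| * exp (-ζ * (t - s)) ≤ C)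
    (hr : ∀ s ∈ Ioc 0 t, |u s 1| * exp (-ζ * (t - s)) ≤ C) :
    ∀ x ∈ Icc (0 : ℝ) 1, |u t x| ≤ C / sin φ := by
  have hsinφ : 0 < sin φ := sin_pos_of_pos_of_lt_pi hφ.1 (by linarith [hφ.2, pi_pos])
  have hC : 0 ≤ C := (mul_nonneg (exp_pos _).le (abs_nonneg _)).trans (h0 0 ⟨le_rfl, zero_le_one⟩)
  intro x hx
  rw [le_div_iff₀ hsinφ]
  refine le_of_forall_gt_imp_ge_of_dense fun C' hC' => ?_
  rw [← le_div_iff₀ hsinφ]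
  refine abs_le_div_sin_of_parabolic_boundary_of_pos ht hφ hκ hζ (hC.trans_lt hC') hu hut hux
    huxx hpde ha (fun y hy => ?_) (fun s hs => ?_) (fun s hs => ?_) x hx
  · exact le_mul_exp_of_mul_exp_neg_le ((mul_comm _ _).trans_le ((h0 y hy).trans hC'.le))
  · exact le_mul_exp_of_mul_exp_neg_le ((hl s hs).trans hC'.le)
  · exact le_mul_exp_of_mul_exp_neg_le ((hr s hs).trans hC'.le)

theorem example3_3_estimate_general
    (T : ℝ)
    (κstar : ℝ) (hκstar : 0 < κstar)
    (κ : ℝ → ℝ) (hκ : ∀ v : ℝ, κstar ≤ κ v)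
    (γ : ℝ → ℝ)
    (φ : ℝ) (hφ : φ ∈ Set.Ioo 0 (Real.pi / 2))
    (δ₀ δ₁ : ℝ → ℝ)
    (w wt wx wxx : ℝ → ℝ → ℝ)
    (hw_cont : ContinuousOn (fun p : ℝ × ℝ => w p.1 p.2) (Set.Icc 0 T ×ˢ Set.Icc 0 1))
    (hwt : ∀ t ∈ Set.Ioc (0:ℝ) T, ∀ x ∈ Set.Icc (0:ℝ) 1,
      HasDerivWithinAt (fun τ => w τ x) (wt t x) (Set.Ioc 0 T) t)
    (hwx : ∀ t ∈ Set.Ioc (0:ℝ) T, ∀ x ∈ Set.Icc (0:ℝ) 1,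
      HasDerivWithinAt (w t) (wx t x) (Set.Icc 0 1) x)
    (hwxx : ∀ t ∈ Set.Ioc (0:ℝ) T, ∀ x ∈ Set.Icc (0:ℝ) 1,
      HasDerivWithinAt (wx t) (wxx t x) (Set.Icc 0 1) x)
    (hpde : ∀ t ∈ Set.Ioc (0:ℝ) T, ∀ x ∈ Set.Icc (0:ℝ) 1,
      wt t x = κ (Function.invFun γ (w t x)) * wxx t x)
    (hbc : ∀ t ∈ Set.Icc (0:ℝ) T, w t 0 = δ₀ t ∧ w t 1 = δ₁ t) :
    ∀ ζ ∈ Set.Ioo (0:ℝ) (κstar * (Real.pi - 2 * φ) ^ 2), ∀ t ∈ Set.Ioc (0:ℝ) T,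
      sSup ((fun x => |w t x|) '' Set.Icc 0 1) ≤
        (1 / Real.sin φ) *
          max (Real.exp (-ζ * t) * sSup ((fun x => |w 0 x|) '' Set.Icc 0 1))
            (sSup ((fun s => max (|δ₀ s|) (|δ₁ s|) *
              Real.exp (-ζ * (t - s))) '' Set.Ioc 0 t)) := by
  intro ζ hζ t ht
  have hw : ContinuousOn (Function.uncurry w) (Icc 0 t ×ˢ Icc 0 1) :=
    hw_cont.mono (prod_mono (Icc_subset_Icc_right ht.2) subset_rfl)
  set N₀ := sSup ((fun x => |w 0 x|) '' Icc 0 1)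
  set Nδ := sSup ((fun s => max |δ₀ s| |δ₁ s| * exp (-ζ * (t - s))) '' Ioc 0 t)
  have hN₀ : ∀ x ∈ Icc (0 : ℝ) 1, |w 0 x| ≤ N₀ := fun x hx =>
    le_csSup (isCompact_Icc.bddAbove_image (hw.uncurry_left 0 (left_mem_Icc.2 ht.1.le)).abs)
      (mem_image_of_mem _ hx)
  -- on `(0, t]` the boundary data are traces of `w`, hence bounded
  have hNδ : ∀ s ∈ Ioc 0 t, max |w s 0| |w s 1| * exp (-ζ * (t - s)) ≤ Nδ := by
    have hδ : EqOn (fun s => max |δ₀ s| |δ₁ s| * exp (-ζ * (t - s)))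
        (fun s => max |w s 0| |w s 1| * exp (-ζ * (t - s))) (Ioc 0 t) := fun s hs => by
      obtain ⟨h0, h1⟩ := hbc s ⟨hs.1.le, hs.2.trans ht.2⟩
      simp only [h0, h1]
    have hcont : ContinuousOn (fun s => max |w s 0| |w s 1| * exp (-ζ * (t - s))) (Icc 0 t) :=
      ((hw.uncurry_right 0 (left_mem_Icc.2 zero_le_one)).abs.sup
        (hw.uncurry_right 1 (right_mem_Icc.2 zero_le_one)).abs).mul (by fun_prop)
    exact fun s hs => (hδ hs).symm.trans_le <| le_csSup
      (isCompact_Icc.bddAbove_image_of_eqOn hcont Ioc_subset_Icc_self hδ) (mem_image_of_mem _ hs)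
  have hbound := abs_le_div_sin_of_parabolic_boundary (C := max (exp (-ζ * t) * N₀) Nδ)
    ht hφ hκstar.le hζ.2 hw_cont hwt hwx hwxx hpde (fun _ _ _ _ => hκ _)
    (fun x hx => le_max_of_le_left (by gcongr; exact hN₀ x hx))
    (fun s hs => le_max_of_le_right ((by gcongr; exact le_max_left _ _ : _ ≤ _).trans (hNδ s hs)))
    (fun s hs => le_max_of_le_right ((by gcongr; exact le_max_right _ _ : _ ≤ _).trans (hNδ s hs)))
  refine csSup_le ⟨_, mem_image_of_mem _ (⟨le_rfl, zero_le_one⟩ : (0 : ℝ) ∈ Icc 0 1)⟩ ?_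
  rintro _ ⟨x, hx, rfl⟩
  rw [one_div_mul_eq_div]
  exact hbound x hx

/-- **Estimate (3.20)/(3.21) in Example 3.3** (Karafyllis–Krstic): for the transformed
heat equation `w_t = κ(γ⁻¹(w))·w_xx` with Dirichlet data `δ₀, δ₁` and `κ ≥ κ* > 0`,
for every `φ ∈ (0,π/2)` (with weight `η(x) = sin((π-2φ)x + φ)`) every classical
solution satisfies, for all `ζ ∈ (0, κ*(π-2φ)²)`, a fading memory ISS estimate in the
sup norm with gain `1/sin(φ)`. -/
theorem example3_3_estimate
    (T : ℝ) (hT : 0 < T)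
    (κstar : ℝ) (hκstar : 0 < κstar)
    (κ : ℝ → ℝ) (hκ_cont : Continuous κ) (hκ : ∀ v : ℝ, κstar ≤ κ v)
    (γ : ℝ → ℝ) (hγ_cont : Continuous γ) (hγ_mono : StrictMono γ)
    (hγ_surj : Function.Surjective γ)
    (φ : ℝ) (hφ : φ ∈ Set.Ioo 0 (Real.pi / 2))
    (δ₀ δ₁ : ℝ → ℝ) (hδ₀ : ContinuousOn δ₀ (Set.Icc 0 T)) (hδ₁ : ContinuousOn δ₁ (Set.Icc 0 T))
    (w wt wx wxx : ℝ → ℝ → ℝ)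
    (hw_cont : ContinuousOn (fun p : ℝ × ℝ => w p.1 p.2) (Set.Icc 0 T ×ˢ Set.Icc 0 1))
    (hwt : ∀ t ∈ Set.Ioc (0:ℝ) T, ∀ x ∈ Set.Icc (0:ℝ) 1,
      HasDerivWithinAt (fun τ => w τ x) (wt t x) (Set.Ioc 0 T) t)
    (hwt_cont : ContinuousOn (fun p : ℝ × ℝ => wt p.1 p.2) (Set.Ioc 0 T ×ˢ Set.Icc 0 1))
    (hwx : ∀ t ∈ Set.Ioc (0:ℝ) T, ∀ x ∈ Set.Icc (0:ℝ) 1,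
      HasDerivWithinAt (w t) (wx t x) (Set.Icc 0 1) x)
    (hwxx : ∀ t ∈ Set.Ioc (0:ℝ) T, ∀ x ∈ Set.Icc (0:ℝ) 1,
      HasDerivWithinAt (wx t) (wxx t x) (Set.Icc 0 1) x)
    (hwxx_cont : ∀ t ∈ Set.Ioc (0:ℝ) T, ContinuousOn (wxx t) (Set.Icc 0 1))
    (hpde : ∀ t ∈ Set.Ioc (0:ℝ) T, ∀ x ∈ Set.Icc (0:ℝ) 1,
      wt t x = κ (Function.invFun γ (w t x)) * wxx t x)
    (hbc : ∀ t ∈ Set.Icc (0:ℝ) T, w t 0 = δ₀ t ∧ w t 1 = δ₁ t) :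
    ∀ ζ ∈ Set.Ioo (0:ℝ) (κstar * (Real.pi - 2 * φ) ^ 2), ∀ t ∈ Set.Ioc (0:ℝ) T,
      sSup ((fun x => |w t x|) '' Set.Icc 0 1) ≤
        (1 / Real.sin φ) *
          max (Real.exp (-ζ * t) * sSup ((fun x => |w 0 x|) '' Set.Icc 0 1))
            (sSup ((fun s => max (|δ₀ s|) (|δ₁ s|) *
              Real.exp (-ζ * (t - s))) '' Set.Ioc 0 t)) :=
  example3_3_estimate_general T κstar hκstar κ hκ γ φ hφ δ₀ δ₁ w wt wx wxx hw_cont hwt hwx hwxx hpde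
    hbc
end
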